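/- arXiv:1801.09132 — 3 statements merged into one kernel-verified Lean document; each statement's English description precedes it below -/
import Mathlib

section
/- Let G be a countable group generated by a finite symmetric set S. For any s ∈ S, any subset A ⊆ G, and any n ≥ 1, the measures ν_n satisfy ν_n(As) ≥ n·ν_n(A) / ((n+1)·|S|²·ρ(G,S)²) − 1/n. -/
/-!
Write `c k = |A(2k,S)|`. Inserting `s s⁻¹` into a loop of length `2k` right after its `i`-th
step gives a loop of length `2k + 2` that visits `As` at time `i + 1` whenever the original loop
visited `A` at time `i`; this injection gives `(k+1) c (k+1) μ_{2k+2}(As) ≥ k c k μ_{2k}(A)`.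
Since `S` is symmetric, `c (k+1) = Σ_g p_k(g) p_{k+2}(g)` for the walk counts `p_m`, so by
Cauchy–Schwarz `c` is log-convex: the ratios `c (k+1) / c k` increase, so each is at most
`lim (c k)^(1/k) = |S|² ρ²`. Hence `μ_{2k+2}(As) ≥ k μ_{2k}(A) / ((k+1) |S|² ρ²)`, and
averaging over `n ≤ k < 2n` gives the claim, the index shift costing at most `1/n`.
-/

open Filter
open scoped Classical

noncomputable section

variable {G : Type*} [Group G]

/-- Words of length `n` with letters in `S` whose product lies in the subgroup `H`.
With `H = ⊥` this is the set `A(n,S)` of walks returning to the identity after `n` steps;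
for general `H` it is `A_H(n,S)`. -/
def wordsIn (S : Finset G) (H : Subgroup G) (n : ℕ) : Finset (Fin n → G) :=
  (Fintype.piFinset fun _ => S).filter fun w => (List.ofFn w).prod ∈ H

/-- `specRad S H` is the spectral radius of the Schreier graph of `H\G` w.r.t. `S`:
`lim (|A_H(2n,S)|/|S|^(2n))^(1/(2n))` (stated via `limsup`; the limit exists).
With `H = ⊥` this is the spectral radius `ρ(⟨S⟩,S)` of the Cayley graph of the group
generated by `S`; by convention it equals `1` when `S` is empty (trivial group). -/
def specRad (S : Finset G) (H : Subgroup G) : ℝ :=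
  if S.Nonempty then
    Filter.limsup
      (fun n : ℕ =>
        (((wordsIn S H (2 * n)).card : ℝ) / (S.card : ℝ) ^ (2 * n)) ^ ((1 : ℝ) / (2 * (n : ℝ))))
      Filter.atTop
  else 1

/-- `conjSubgroup g H = H^g = g⁻¹ H g`. -/
def conjSubgroup (g : G) (H : Subgroup G) : Subgroup G :=
  Subgroup.map (MulAut.conj g⁻¹).toMonoidHom H

/-- `prefixProd w i = w(i) = a₁⋯aᵢ`, the position of the walk `w` after `i` steps. -/
def prefixProd {n : ℕ} (w : Fin n → G) (i : ℕ) : G := ((List.ofFn w).take i).prod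

/-- `muMass S n A = μₙ(A) = (1/(n|A(n,S)|)) Σ_{w ∈ A(n,S)} #{1 ≤ i ≤ n : w(i) ∈ A}`,
the expected proportion of time a uniformly random recurrent walk of length `n` spends in `A`. -/
def muMass (S : Finset G) (n : ℕ) (A : Set G) : ℝ :=
  (1 / ((n : ℝ) * ((wordsIn S ⊥ n).card : ℝ))) *
    ∑ w ∈ wordsIn S ⊥ n, (((Finset.Icc 1 n).filter fun i => prefixProd w i ∈ A).card : ℝ)

/-- `nuMass S n A = νₙ(A) = (1/n) Σ_{k=n+1}^{2n} μ_{2k}(A)`. -/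
def nuMass (S : Finset G) (n : ℕ) (A : Set G) : ℝ :=
  (1 / (n : ℝ)) * ∑ k ∈ Finset.Icc (n + 1) (2 * n), muMass S (2 * k) A

open Topology

def wordsOfLength {α : Type*} (S : Finset α) (m : ℕ) : Finset (List α) :=
  (Fintype.piFinset fun _ : Fin m => S).image List.ofFn

lemma mem_wordsOfLength {α : Type*} {S : Finset α} {m : ℕ} {l : List α} :
    l ∈ wordsOfLength S m ↔ l.length = m ∧ ∀ x ∈ l, x ∈ S := by
  constructor
  · intro hl
    obtain ⟨w, hw, rfl⟩ := Finset.mem_image.mp hl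
    simp only [Fintype.mem_piFinset] at hw
    simpa [List.mem_ofFn] using hw
  · rintro ⟨rfl, hmem⟩
    exact Finset.mem_image.mpr
      ⟨l.get, Fintype.mem_piFinset.mpr fun i => hmem _ (List.get_mem l i), List.ofFn_get l⟩

lemma card_wordsOfLength {α : Type*} (S : Finset α) (m : ℕ) :
    (wordsOfLength S m).card = S.card ^ m := by
  rw [wordsOfLength, Finset.card_image_of_injective _ List.ofFn_injective]
  simp

def walkCount (S : Finset G) (m : ℕ) (g : G) : ℕ :=
  ((wordsOfLength S m).filter fun l => l.prod = g).card

lemma walkCount_le (S : Finset G) (m : ℕ) (g : G) : walkCount S m g ≤ S.card ^ m :=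
  card_wordsOfLength S m ▸ Finset.card_filter_le _ _

lemma filter_image_ofFn_wordsIn_bot (S : Finset G) (m : ℕ) :
    (wordsIn S ⊥ m).image List.ofFn = (wordsOfLength S m).filter fun l => l.prod = 1 := by
  simp only [wordsIn, wordsOfLength, Finset.filter_image, Subgroup.mem_bot]

lemma card_wordsIn_bot (S : Finset G) (m : ℕ) : (wordsIn S ⊥ m).card = walkCount S m 1 := by
  rw [walkCount, ← filter_image_ofFn_wordsIn_bot,
    Finset.card_image_of_injective _ List.ofFn_injective]

lemma walkCount_add (S : Finset G) (m m' : ℕ) (x : G) :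
    walkCount S (m + m') x = ∑ l ∈ wordsOfLength S m, walkCount S m' (l.prod⁻¹ * x) := by
  simp only [walkCount]
  rw [← Finset.card_sigma]
  refine Finset.card_nbij' (fun l => ⟨l.take m, l.drop m⟩) (fun p => p.1 ++ p.2) ?_ ?_ ?_ ?_
  · rintro l hl
    simp only [Finset.coe_filter, Set.mem_ofPred_eq, mem_wordsOfLength] at hl
    obtain ⟨⟨hlen, hS⟩, rfl⟩ := hl
    simp only [Finset.coe_sigma, Set.mem_sigma_iff, Finset.mem_coe, Finset.mem_filter,
      mem_wordsOfLength]
    refine ⟨⟨by simp [hlen], fun x hx => hS x (List.mem_of_mem_take hx)⟩,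
      ⟨by simp [hlen], fun x hx => hS x (List.mem_of_mem_drop hx)⟩, ?_⟩
    rw [← List.prod_take_mul_prod_drop l m, inv_mul_cancel_left]
  · rintro ⟨l₁, l₂⟩ hp
    simp only [Finset.coe_sigma, Set.mem_sigma_iff, Finset.mem_coe, Finset.mem_filter,
      mem_wordsOfLength] at hp
    obtain ⟨⟨h₁, hS₁⟩, ⟨h₂, hS₂⟩, hprod⟩ := hp
    simp only [Finset.coe_filter, Set.mem_ofPred_eq, mem_wordsOfLength, List.length_append,
      List.mem_append, List.prod_append, hprod, h₁, h₂, mul_inv_cancel_left, and_true]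
    exact ⟨trivial, fun x hx => hx.elim (hS₁ x) (hS₂ x)⟩
  · intro l _
    simp
  · rintro ⟨l₁, l₂⟩ hp
    simp only [Finset.coe_sigma, Set.mem_sigma_iff, Finset.mem_coe, mem_wordsOfLength] at hp
    simp [← hp.1.1]

lemma walkCount_add_eq_sum (S : Finset G) (m m' : ℕ) (x : G) {U : Finset G}
    (hU : (wordsOfLength S m).image List.prod ⊆ U) :
    walkCount S (m + m') x = ∑ g ∈ U, walkCount S m g * walkCount S m' (g⁻¹ * x) := by
  rw [walkCount_add, Finset.sum_comp (fun g => walkCount S m' (g⁻¹ * x)) List.prod]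
  refine Finset.sum_subset hU fun g _ hg => ?_
  have : (wordsOfLength S m).filter (fun l => l.prod = g) = ∅ :=
    Finset.filter_eq_empty_iff.mpr fun l hl h => hg (h ▸ Finset.mem_image_of_mem _ hl)
  simp [walkCount, this]

lemma walkCount_inv {S : Finset G} (hsymm : ∀ t ∈ S, t⁻¹ ∈ S) (m : ℕ) (g : G) :
    walkCount S m g⁻¹ = walkCount S m g := by
  have key : ∀ {h : G} {l : List G}, l ∈ (wordsOfLength S m).filter (fun l => l.prod = h) →
      (l.map (·⁻¹)).reverse ∈ (wordsOfLength S m).filter (fun l => l.prod = h⁻¹) := by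
    intro h l hl
    simp only [Finset.mem_filter, mem_wordsOfLength] at hl ⊢
    obtain ⟨⟨hlen, hS⟩, rfl⟩ := hl
    refine ⟨⟨by simp [hlen], fun x hx => ?_⟩, (List.prod_inv_reverse l).symm⟩
    obtain ⟨y, hy, rfl⟩ := List.mem_map.mp (List.mem_reverse.mp hx)
    exact hsymm y (hS y hy)
  refine Finset.card_nbij' (fun l => (l.map (·⁻¹)).reverse) (fun l => (l.map (·⁻¹)).reverse)
    (fun l hl => by simpa using key hl) (fun l hl => key hl) ?_ ?_ <;>
  · intro l _
    simp [List.map_reverse]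

lemma walkCount_two_mul_pos {S : Finset G} {s : G} (hs : s ∈ S) (hsymm : ∀ t ∈ S, t⁻¹ ∈ S)
    (k : ℕ) : 0 < walkCount S (2 * k) 1 := by
  refine Finset.card_pos.mpr ⟨(List.replicate k [s, s⁻¹]).flatten, ?_⟩
  simp only [Finset.mem_filter, mem_wordsOfLength, List.length_flatten, List.map_replicate,
    List.sum_replicate, List.mem_flatten, List.mem_replicate, List.prod_flatten]
  refine ⟨⟨by simp [mul_comm], ?_⟩, by simp⟩
  rintro x ⟨l, ⟨-, rfl⟩, hx⟩
  simp only [List.mem_cons, List.not_mem_nil, or_false] at hx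
  rcases hx with rfl | rfl
  exacts [hs, hsymm s hs]

lemma sq_walkCount_add_le {S : Finset G} (hsymm : ∀ t ∈ S, t⁻¹ ∈ S) (m m' : ℕ) :
    walkCount S (m + m') 1 ^ 2 ≤ walkCount S (m + m) 1 * walkCount S (m' + m') 1 := by
  set U := (wordsOfLength S m).image List.prod ∪ (wordsOfLength S m').image List.prod
  have hsum : ∀ k k', (wordsOfLength S k).image List.prod ⊆ U →
      walkCount S (k + k') 1 = ∑ g ∈ U, walkCount S k g * walkCount S k' g := by
    intro k k' hk
    simp only [walkCount_add_eq_sum S k k' 1 hk, mul_one, walkCount_inv hsymm]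
  rw [hsum m m' Finset.subset_union_left, hsum m m Finset.subset_union_left,
    hsum m' m' Finset.subset_union_right]
  simpa only [← sq] using Finset.sum_mul_sq_le_sq_mul_sq U _ _

lemma monotone_div_of_sq_le_mul {b : ℕ → ℝ} (hb : ∀ j, 0 < b j)
    (hlc : ∀ j, b (j + 1) ^ 2 ≤ b j * b (j + 2)) : Monotone fun j => b (j + 1) / b j := by
  refine monotone_nat_of_le_succ fun j => ?_
  rw [div_le_div_iff₀ (hb j) (hb (j + 1)), ← sq, mul_comm]
  exact hlc j

lemma mul_div_pow_le_of_sq_le_mul {b : ℕ → ℝ} (hb : ∀ j, 0 < b j)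
    (hlc : ∀ j, b (j + 1) ^ 2 ≤ b j * b (j + 2)) {k m : ℕ} (hkm : k ≤ m) :
    b k * (b (k + 1) / b k) ^ (m - k) ≤ b m := by
  induction m, hkm using Nat.le_induction with
  | base => simp
  | succ m hkm ih =>
    calc b k * (b (k + 1) / b k) ^ (m + 1 - k)
        = b k * (b (k + 1) / b k) ^ (m - k) * (b (k + 1) / b k) := by
          rw [Nat.sub_add_comm hkm, pow_succ, mul_assoc]
      _ ≤ b m * (b (m + 1) / b m) :=
          mul_le_mul ih (monotone_div_of_sq_le_mul hb hlc hkm) (div_pos (hb _) (hb _)).le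
            (hb m).le
      _ = b (m + 1) := mul_div_cancel₀ _ (hb m).ne'

lemma tendsto_mul_pow_rpow_one_div_two_mul {c q : ℝ} (hc : 0 < c) (hq : 0 ≤ q) :
    Tendsto (fun m : ℕ => (c * q ^ m) ^ ((1 : ℝ) / (2 * m))) atTop (𝓝 (√q)) := by
  have hexp : Tendsto (fun m : ℕ => (1 : ℝ) / (2 * m)) atTop (𝓝 0) := by
    simpa [mul_comm] using tendsto_one_div_atTop_nhds_zero_nat.const_mul (1 / 2 : ℝ)
  have hc_pow : Tendsto (fun m : ℕ => c ^ ((1 : ℝ) / (2 * m))) atTop (𝓝 1) := by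
    simpa [Function.comp_def] using (Real.continuousAt_const_rpow hc.ne').tendsto.comp hexp
  refine (hc_pow.mul_const √q).congr' ?_ |>.trans (by rw [one_mul])
  filter_upwards [eventually_ne_atTop 0] with m hm
  rw [Real.mul_rpow hc.le (pow_nonneg hq m), ← Real.rpow_natCast,
    ← Real.rpow_mul hq, Real.sqrt_eq_rpow]
  congr 2
  field_simp

lemma div_le_sq_limsup_rpow_of_sq_le_mul {b : ℕ → ℝ} (hb : ∀ j, 0 < b j) (hb1 : ∀ j, b j ≤ 1)
    (hlc : ∀ j, b (j + 1) ^ 2 ≤ b j * b (j + 2)) (k : ℕ) :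
    b (k + 1) / b k ≤ limsup (fun m : ℕ => b m ^ ((1 : ℝ) / (2 * m))) atTop ^ 2 := by
  set q := b (k + 1) / b k
  have hq : 0 < q := div_pos (hb _) (hb _)
  have hc : 0 < b k / q ^ k := div_pos (hb k) (pow_pos hq k)
  have hlim := tendsto_mul_pow_rpow_one_div_two_mul hc hq.le
  have hlow : ∀ᶠ m : ℕ in atTop, (b k / q ^ k * q ^ m) ^ ((1 : ℝ) / (2 * m)) ≤
      b m ^ ((1 : ℝ) / (2 * m)) := by
    filter_upwards [eventually_ge_atTop k] with m hkm
    refine Real.rpow_le_rpow (by positivity) ?_ (by positivity)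
    calc b k / q ^ k * q ^ m = b k * q ^ (m - k) := by
          rw [← Nat.sub_add_cancel hkm, pow_add, Nat.add_sub_cancel]
          field_simp
      _ ≤ b m := mul_div_pow_le_of_sq_le_mul hb hlc hkm
  have hbdd : IsBoundedUnder (· ≤ ·) atTop fun m : ℕ => b m ^ ((1 : ℝ) / (2 * m)) :=
    isBoundedUnder_of ⟨1, fun m => Real.rpow_le_one (hb m).le (hb1 m) (by positivity)⟩
  have hsqrt : √q ≤ limsup (fun m : ℕ => b m ^ ((1 : ℝ) / (2 * m))) atTop :=
    hlim.limsup_eq ▸ limsup_le_limsup hlow hlim.isBoundedUnder_ge.isCoboundedUnder_le hbdd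
  exact (Real.sqrt_le_iff.mp hsqrt).2

lemma walkCount_succ_le {S : Finset G} {s : G} (hs : s ∈ S) (hsymm : ∀ t ∈ S, t⁻¹ ∈ S) (k : ℕ) :
    (walkCount S (2 * (k + 1)) 1 : ℝ) ≤
      (S.card : ℝ) ^ 2 * specRad S ⊥ ^ 2 * walkCount S (2 * k) 1 := by
  set b : ℕ → ℝ := fun j => walkCount S (2 * j) 1 / (S.card : ℝ) ^ (2 * j)
  have hS : (0 : ℝ) < S.card := by exact_mod_cast Finset.card_pos.mpr ⟨s, hs⟩
  have hc : ∀ j, (0 : ℝ) < walkCount S (2 * j) 1 := fun j => by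
    exact_mod_cast walkCount_two_mul_pos hs hsymm j
  have hb : ∀ j, 0 < b j := fun j => div_pos (hc j) (by positivity)
  have hb1 : ∀ j, b j ≤ 1 := fun j =>
    div_le_one_of_le₀ (by exact_mod_cast walkCount_le S (2 * j) 1) (by positivity)
  have hlc : ∀ j, b (j + 1) ^ 2 ≤ b j * b (j + 2) := fun j => by
    have h := sq_walkCount_add_le hsymm j (j + 2)
    rw [show j + (j + 2) = 2 * (j + 1) by ring, ← two_mul,
      show j + 2 + (j + 2) = 2 * (j + 2) by ring] at h
    simp only [b, div_pow, ← pow_mul, div_mul_div_comm, ← pow_add]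
    rw [show 2 * (j + 1) * 2 = 2 * j + 2 * (j + 2) by ring]
    gcongr
    exact_mod_cast h
  have hspec : specRad S ⊥ = limsup (fun m : ℕ => b m ^ ((1 : ℝ) / (2 * m))) atTop := by
    simp only [specRad, if_pos (Finset.card_pos.mp (by exact_mod_cast hS)), card_wordsIn_bot, b]
  have h := div_le_sq_limsup_rpow_of_sq_le_mul hb hb1 hlc k
  rw [← hspec, div_le_iff₀ (hb k)] at h
  calc (walkCount S (2 * (k + 1)) 1 : ℝ) = b (k + 1) * (S.card : ℝ) ^ (2 * (k + 1)) := by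
        simp only [b]; field_simp
    _ ≤ specRad S ⊥ ^ 2 * b k * (S.card : ℝ) ^ (2 * (k + 1)) := by gcongr
    _ = (S.card : ℝ) ^ 2 * specRad S ⊥ ^ 2 * walkCount S (2 * k) 1 := by
        simp only [b]; field_simp; ring

def visitCount (A : Set G) (l : List G) : ℕ :=
  ((Finset.Icc 1 l.length).filter fun i => (l.take i).prod ∈ A).card

lemma sum_visitCount_le (S : Finset G) (m : ℕ) (A : Set G) :
    ∑ l ∈ (wordsOfLength S m).filter (fun l => l.prod = 1), visitCount A l ≤
      m * walkCount S m 1 := by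
  rw [walkCount, mul_comm, ← smul_eq_mul, ← Finset.sum_const]
  refine Finset.sum_le_sum fun l hl => ?_
  obtain ⟨hlen, -⟩ := mem_wordsOfLength.mp (Finset.mem_filter.mp hl).1
  calc visitCount A l ≤ (Finset.Icc 1 l.length).card := Finset.card_filter_le _ _
    _ = m := by simp [hlen]

lemma muMass_eq (S : Finset G) (m : ℕ) (A : Set G) :
    muMass S m A = (∑ l ∈ (wordsOfLength S m).filter (fun l => l.prod = 1), (visitCount A l : ℝ)) /
      (m * walkCount S m 1) := by
  rw [muMass, card_wordsIn_bot, one_div_mul_eq_div, ← filter_image_ofFn_wordsIn_bot,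
    Finset.sum_image fun w _ w' _ h => List.ofFn_injective h]
  congr 1
  refine Finset.sum_congr rfl fun w _ => ?_
  rw [visitCount, List.length_ofFn]
  rfl

lemma muMass_nonneg (S : Finset G) (m : ℕ) (A : Set G) : 0 ≤ muMass S m A := by
  rw [muMass_eq]
  positivity

lemma muMass_le_one (S : Finset G) (m : ℕ) (A : Set G) : muMass S m A ≤ 1 := by
  rw [muMass_eq]
  exact div_le_one_of_le₀ (by exact_mod_cast sum_visitCount_le S m A) (by positivity)

lemma natCast_mul_walkCount_mul_muMass (S : Finset G) (m : ℕ) (A : Set G) :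
    (m : ℝ) * walkCount S m 1 * muMass S m A =
      ∑ l ∈ (wordsOfLength S m).filter (fun l => l.prod = 1), (visitCount A l : ℝ) := by
  rw [muMass_eq]
  rcases eq_or_ne ((m : ℝ) * walkCount S m 1) 0 with h | h
  · have hmc : m * walkCount S m 1 = 0 := by exact_mod_cast h
    rw [h, zero_mul]
    exact_mod_cast (Nat.le_zero.mp ((sum_visitCount_le S m A).trans_eq hmc)).symm
  · exact mul_div_cancel₀ _ h

lemma sum_visitCount_le_sum_visitCount_image_mul {S : Finset G} {s : G} (hs : s ∈ S)
    (hs' : s⁻¹ ∈ S) (m : ℕ) (A : Set G) :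
    ∑ l ∈ (wordsOfLength S m).filter (fun l => l.prod = 1), visitCount A l ≤
      ∑ l ∈ (wordsOfLength S (m + 2)).filter (fun l => l.prod = 1),
        visitCount ((fun a => a * s) '' A) l := by
  simp only [visitCount]
  rw [← Finset.card_sigma, ← Finset.card_sigma]
  let ins : (Σ _ : List G, ℕ) → Σ _ : List G, ℕ :=
    fun p => ⟨p.1.take p.2 ++ s :: s⁻¹ :: p.1.drop p.2, p.2 + 1⟩
  let del : (Σ _ : List G, ℕ) → Σ _ : List G, ℕ :=
    fun p => ⟨p.1.take (p.2 - 1) ++ p.1.drop (p.2 + 1), p.2 - 1⟩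
  refine Finset.card_le_card_of_injOn ins ?_ (Set.LeftInvOn.injOn (f₁' := del) ?_)
  · rintro ⟨l, i⟩ hp
    simp only [Finset.coe_sigma, Set.mem_sigma_iff, Finset.mem_coe, Finset.mem_filter,
      mem_wordsOfLength, Finset.mem_Icc, ins] at hp ⊢
    obtain ⟨⟨⟨hlen, hS⟩, hprod⟩, ⟨hi1, hi2⟩, hA⟩ := hp
    have htake : (l.take i ++ s :: s⁻¹ :: l.drop i).take (i + 1) = l.take i ++ [s] := by
      simp [List.take_append, show i ≤ l.length by omega]
    refine ⟨⟨⟨by simp; omega, ?_⟩, by simp [hprod]⟩, ⟨by omega, by simp; omega⟩, ?_⟩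
    · intro x hx
      simp only [List.mem_append, List.mem_cons] at hx
      rcases hx with hx | rfl | rfl | hx
      exacts [hS x (List.mem_of_mem_take hx), hs, hs', hS x (List.mem_of_mem_drop hx)]
    · rw [htake, List.prod_append]
      exact ⟨_, hA, by simp⟩
  · rintro ⟨l, i⟩ hp
    simp only [Finset.coe_sigma, Set.mem_sigma_iff, Finset.mem_coe, Finset.mem_filter,
      mem_wordsOfLength, Finset.mem_Icc] at hp
    have hi : (l.take i).length = i := List.length_take_of_le hp.2.1.2
    simp [ins, del, List.drop_append, hi, show i + 1 + 1 - i = 2 by omega,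
      List.drop_eq_nil_of_le (show (l.take i).length ≤ i + 1 + 1 by omega)]

lemma one_le_card_sq_mul_specRad_sq {S : Finset G} {s : G} (hs : s ∈ S)
    (hsymm : ∀ t ∈ S, t⁻¹ ∈ S) : 1 ≤ (S.card : ℝ) ^ 2 * specRad S ⊥ ^ 2 := by
  have h := walkCount_succ_le hs hsymm 0
  have h0 : walkCount S 0 1 = 1 := by
    simp [walkCount, wordsOfLength, Finset.filter_singleton]
  have h1 : (1 : ℝ) ≤ walkCount S (2 * (0 + 1)) 1 := by
    exact_mod_cast walkCount_two_mul_pos hs hsymm 1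
  simpa [h0] using h1.trans h

lemma mul_muMass_le_mul_muMass_image_mul {S : Finset G} {s : G} (hs : s ∈ S)
    (hsymm : ∀ t ∈ S, t⁻¹ ∈ S) (j : ℕ) (A : Set G) :
    (j : ℝ) * muMass S (2 * j) A ≤
      (j + 1) * ((S.card : ℝ) ^ 2 * specRad S ⊥ ^ 2) *
        muMass S (2 * (j + 1)) ((fun a => a * s) '' A) := by
  set R := (S.card : ℝ) ^ 2 * specRad S ⊥ ^ 2
  set μ' := muMass S (2 * (j + 1)) ((fun a => a * s) '' A)
  have hc : (0 : ℝ) < walkCount S (2 * j) 1 := by exact_mod_cast walkCount_two_mul_pos hs hsymm j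
  have hvisits : (2 * j : ℕ) * (walkCount S (2 * j) 1 : ℝ) * muMass S (2 * j) A ≤
      (2 * (j + 1) : ℕ) * (walkCount S (2 * (j + 1)) 1 : ℝ) * μ' := by
    rw [natCast_mul_walkCount_mul_muMass, natCast_mul_walkCount_mul_muMass]
    exact_mod_cast sum_visitCount_le_sum_visitCount_image_mul hs (hsymm s hs) (2 * j) A
  have hμ' : 0 ≤ μ' := muMass_nonneg _ _ _
  have hwalk := walkCount_succ_le hs hsymm j
  push_cast at hvisits
  refine le_of_mul_le_mul_left ?_ (mul_pos two_pos hc)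
  calc 2 * (walkCount S (2 * j) 1 : ℝ) * (j * muMass S (2 * j) A)
      ≤ 2 * (j + 1) * walkCount S (2 * (j + 1)) 1 * μ' := by linarith
    _ ≤ 2 * (j + 1) * (R * walkCount S (2 * j) 1) * μ' := by gcongr
    _ = 2 * walkCount S (2 * j) 1 * ((j + 1) * R * μ') := by ring

lemma div_mul_muMass_le_muMass_image_mul {S : Finset G} {s : G} (hs : s ∈ S)
    (hsymm : ∀ t ∈ S, t⁻¹ ∈ S) {n j : ℕ} (hnj : n ≤ j) (A : Set G) :
    n / ((n + 1) * ((S.card : ℝ) ^ 2 * specRad S ⊥ ^ 2)) * muMass S (2 * j) A ≤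
      muMass S (2 * (j + 1)) ((fun a => a * s) '' A) := by
  set R := (S.card : ℝ) ^ 2 * specRad S ⊥ ^ 2
  have hR : 0 < R := one_pos.trans_le (one_le_card_sq_mul_specRad_sq hs hsymm)
  have hnj' : (n : ℝ) / (n + 1) ≤ j / (j + 1) := by
    rw [div_le_div_iff₀ (by positivity) (by positivity)]
    nlinarith [(Nat.cast_le (α := ℝ)).mpr hnj]
  calc n / ((n + 1) * R) * muMass S (2 * j) A
      = n / (n + 1) / R * muMass S (2 * j) A := by rw [div_div]
    _ ≤ j / (j + 1) / R * muMass S (2 * j) A := by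
        gcongr ?_ / _ * _
        exact muMass_nonneg _ _ _
    _ = j * muMass S (2 * j) A / ((j + 1) * R) := by rw [div_div, div_mul_eq_mul_div]
    _ ≤ muMass S (2 * (j + 1)) ((fun a => a * s) '' A) := by
        rw [div_le_iff₀ (by positivity)]
        linarith [mul_muMass_le_mul_muMass_image_mul hs hsymm j A]

lemma nuMass_eq_sum_Ico (S : Finset G) (n : ℕ) (A : Set G) :
    nuMass S n A = (n : ℝ)⁻¹ * ∑ k ∈ Finset.Ico n (2 * n), muMass S (2 * (k + 1)) A := by
  rw [nuMass, Finset.sum_Ico_add' (fun k => muMass S (2 * k) A), Finset.Ico_add_one_right_eq_Icc,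
    one_div]

lemma sum_Ico_succ_le_sum_Ico_add_one {f : ℕ → ℝ} {a b : ℕ} (hab : a ≤ b) (ha : 0 ≤ f a)
    (hb : f b ≤ 1) : ∑ k ∈ Finset.Ico a b, f (k + 1) ≤ ∑ k ∈ Finset.Ico a b, f k + 1 := by
  have h := Finset.sum_Ico_sub (f := f) hab
  rw [Finset.sum_sub_distrib] at h
  linarith

theorem nu_quasi_invariant_general
    (S : Finset G)
    (hsymm : ∀ s ∈ S, s⁻¹ ∈ S)
    (n : ℕ) (s : G) (hs : s ∈ S) (A : Set G) :
    nuMass S n ((fun a => a * s) '' A) ≥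
      (n : ℝ) * nuMass S n A / (((n : ℝ) + 1) * (S.card : ℝ) ^ 2 * specRad S ⊥ ^ 2)
        - 1 / (n : ℝ) := by
  set R := (S.card : ℝ) ^ 2 * specRad S ⊥ ^ 2
  set C := (n : ℝ) / ((n + 1) * R)
  have hR : 1 ≤ R := one_le_card_sq_mul_specRad_sq hs hsymm
  have hC : C ≤ 1 := div_le_one_of_le₀ (by nlinarith) (by positivity)
  have hshift := sum_Ico_succ_le_sum_Ico_add_one (f := fun k => muMass S (2 * k) A)
    (by omega : n ≤ 2 * n) (muMass_nonneg S _ A) (muMass_le_one S _ A)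
  rw [ge_iff_le, mul_assoc _ ((S.card : ℝ) ^ 2), mul_div_right_comm]
  calc C * nuMass S n A - 1 / n
      ≤ (n : ℝ)⁻¹ * (C * (∑ k ∈ Finset.Ico n (2 * n), muMass S (2 * (k + 1)) A - 1)) := by
        rw [nuMass_eq_sum_Ico, one_div]
        nlinarith [inv_nonneg.mpr (Nat.cast_nonneg (α := ℝ) n)]
    _ ≤ (n : ℝ)⁻¹ * ∑ k ∈ Finset.Ico n (2 * n), C * muMass S (2 * k) A := by
        rw [← Finset.mul_sum]
        gcongr
        linarith
    _ ≤ nuMass S n ((fun a => a * s) '' A) := by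
        rw [nuMass_eq_sum_Ico]
        gcongr with k hk
        exact div_mul_muMass_le_muMass_image_mul hs hsymm (Finset.mem_Ico.mp hk).1 A

/-- **Lemma (asymptotic quasi-invariance).** For any `s ∈ S` and any `A ⊆ G`,
`νₙ(As) ≥ n·νₙ(A)/((n+1)|S|²ρ(G,S)²) − 1/n`. -/
theorem nu_quasi_invariant [Countable G]
    (S : Finset G) (hgen : Subgroup.closure (S : Set G) = ⊤)
    (hsymm : ∀ s ∈ S, s⁻¹ ∈ S)
    (n : ℕ) (hn : 1 ≤ n) (s : G) (hs : s ∈ S) (A : Set G) :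
    nuMass S n ((fun a => a * s) '' A) ≥
      (n : ℝ) * nuMass S n A / (((n : ℝ) + 1) * (S.card : ℝ) ^ 2 * specRad S ⊥ ^ 2)
        - 1 / (n : ℝ) :=
  nu_quasi_invariant_general S hsymm n s hs A

end
end

section
/- Let G be a countable group generated by a finite symmetric set S, let H ≤ G, and let n ≥ 1 be such that A(n,S) ≠ ∅. For a word w = (a_1,…,a_n) ∈ A(n,S) let T(w) = {t ∈ {1,…,n} : a_t ∈ H^{w(t−1)}} (the set of times at which the walk does not change H-coset, where w(0) = 1). Then log|A_H(n,S)| − log|A(n,S)| ≥ (1/|A(n,S)|) · Σ_{w∈A(n,S)} Σ_{t∈T(w)} (−log ρ(H^{w(t)}, H^{w(t)} ∩ S)). -/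
open Filter
open scoped Classical

noncomputable section

variable {G : Type*} [Group G]

/-!
Sort the walks of `A(n,S)` by their *skeleton*: which steps stay in the current right `H`-coset,
and the letters of the other steps. The words of `Sⁿ` with the skeleton of `w₀` form the product
set `∏ᵢ Aᵢ`, where `Aᵢ = S ∩ H^{w₀(i)}` if `i + 1 ∈ T(w₀)` and `Aᵢ = {w₀ i}` otherwise, and they
all lie in `A_H(n,S)`. The returning ones are counted by the coefficient at `1` of
`χ_{A₁} ⋯ χ_{Aₙ}` in `ℝ[G]`, which is at most the product of the `ℓ²` operator norms of left
multiplication by the `χ_{Aᵢ}`. For symmetric `F` this norm is at most `ρ(F)|F|`: iterate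
Cauchy–Schwarz on `⟨χ_F^{2^k} x, x⟩ ≤ |A(2^k,F)| ‖x‖₁²` and use `|A(2m,F)| ≤ (ρ(F)|F|)^{2m}`,
a consequence of the supermultiplicativity of `|A(2m,F)|`. Hence each skeleton class of `A(n,S)`
has at most `R(w₀) = ∏_{t ∈ T(w₀)} ρ_t` times as many elements as the same class of `A_H(n,S)`,
so `∑_{w ∈ A(n,S)} 1/R(w) ≤ |A_H(n,S)|`, and Jensen's inequality for `log` concludes.
-/

open MonoidAlgebra Finset

lemma le_of_sq_le_succ_of_le_pow_two_pow {t : ℕ → ℝ} {C r : ℝ} (hr : 0 < r) (h0 : 0 ≤ t 0)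
    (hsq : ∀ k, t k ^ 2 ≤ t (k + 1)) (hle : ∀ k, t k ≤ C * r ^ 2 ^ k) : t 0 ≤ r := by
  have hpow : ∀ k, t 0 ^ 2 ^ k ≤ t k := by
    intro k
    induction k with
    | zero => simp
    | succ k ih =>
      rw [pow_succ, pow_mul]
      exact (pow_le_pow_left₀ (pow_nonneg h0 _) ih 2).trans (hsq k)
  by_contra! h
  obtain ⟨k, hk⟩ := (((tendsto_pow_atTop_atTop_of_one_lt ((one_lt_div hr).2 h)).comp
    (tendsto_pow_atTop_atTop_of_one_lt (α := ℕ) one_lt_two)).eventually_gt_atTop C).exists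
  have : (t 0 / r) ^ 2 ^ k ≤ C := by
    rw [div_pow, div_le_iff₀ (by positivity)]
    exact (hpow k).trans (hle k)
  exact (this.trans_lt hk).false

lemma le_mul_of_sq_le_mul_succ {b : ℕ → ℝ} {C N r : ℝ} (hr : 0 < r) (hN : 0 ≤ N)
    (h0 : 0 ≤ b 0) (hsq : ∀ k, b k ^ 2 ≤ b (k + 1) * N) (hle : ∀ k, b k ≤ C * r ^ 2 ^ k) :
    b 0 ≤ r * N := by
  rcases hN.eq_or_lt with rfl | hN
  · nlinarith [hsq 0]
  rw [← div_le_iff₀ hN]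
  refine le_of_sq_le_succ_of_le_pow_two_pow (t := fun k => b k / N) (C := C / N) hr
    (div_nonneg h0 hN.le) (fun k => ?_) (fun k => ?_)
  · rw [div_pow, div_le_div_iff₀ (by positivity) hN, sq N, ← mul_assoc]
    exact mul_le_mul_of_nonneg_right (hsq k) hN.le
  · rw [div_mul_eq_mul_div, div_le_div_iff_of_pos_right hN]
    exact hle k

lemma sum_filter_Icc_one_eq_sum_fin {M : Type*} [AddCommMonoid M] (n : ℕ) (p : ℕ → Prop)
    [DecidablePred p] (f : ℕ → M) :
    ∑ t ∈ Icc 1 n with p t, f t = ∑ i : Fin n, if p (i + 1) then f (i + 1) else 0 := by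
  rw [sum_filter, ← Ico_add_one_right_eq_Icc, sum_Ico_eq_sum_range, Nat.add_sub_cancel,
    ← Fin.sum_univ_eq_sum_range (fun i => if p (1 + i) then f (1 + i) else 0)]
  simp only [add_comm 1]

lemma sum_inv_le_card_of_card_fiber_le {α β : Type*} [DecidableEq β] (κ : α → β)
    {Ω A : Finset α} {R : α → ℝ} (hR : ∀ w ∈ Ω, 0 < R w)
    (hκ : ∀ w ∈ Ω, ∀ v ∈ Ω, κ v = κ w → R v = R w)
    (hfiber : ∀ w ∈ Ω, (#{v ∈ Ω | κ v = κ w} : ℝ) ≤ R w * #{v ∈ A | κ v = κ w}) :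
    ∑ w ∈ Ω, (R w)⁻¹ ≤ #A := by
  rw [← sum_fiberwise_of_maps_to fun w hw => mem_image_of_mem κ hw]
  calc ∑ σ ∈ Ω.image κ, ∑ w ∈ Ω with κ w = σ, (R w)⁻¹
      ≤ ∑ σ ∈ Ω.image κ, (#{v ∈ A | κ v = σ} : ℝ) := sum_le_sum fun σ hσ => by
        obtain ⟨w, hw, rfl⟩ := mem_image.1 hσ
        rw [sum_congr rfl fun v hv => by rw [hκ w hw v (mem_filter.1 hv).1 (mem_filter.1 hv).2]]
        rw [sum_const, nsmul_eq_mul, ← div_eq_mul_inv, div_le_iff₀' (hR w hw)]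
        exact hfiber w hw
    _ = #{v ∈ A | κ v ∈ Ω.image κ} := by
        exact_mod_cast sum_card_fiberwise_eq_card_filter _ _ _
    _ ≤ #A := by exact_mod_cast card_filter_le _ _

lemma mul_sum_neg_log_le {ι : Type*} {s : Finset ι} (hs : s.Nonempty) {R : ι → ℝ}
    (hR : ∀ i ∈ s, 0 < R i) {N : ℝ} (hN : ∑ i ∈ s, (R i)⁻¹ ≤ N) :
    1 / (#s : ℝ) * ∑ i ∈ s, -Real.log (R i) ≤ Real.log N - Real.log #s := by
  have hcard : (0 : ℝ) < #s := by exact_mod_cast hs.card_pos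
  have hsum : 0 < ∑ i ∈ s, (R i)⁻¹ := sum_pos (fun i hi => inv_pos.2 (hR i hi)) hs
  have hjensen := strictConcaveOn_log_Ioi.concaveOn.le_map_sum (t := s)
    (w := fun _ => 1 / (#s : ℝ)) (p := fun i => (R i)⁻¹) (fun _ _ => by positivity)
    (by simp [hcard.ne']) fun i hi => Set.mem_Ioi.2 (inv_pos.2 (hR i hi))
  simp only [smul_eq_mul, Real.log_inv, ← mul_sum] at hjensen
  calc 1 / (#s : ℝ) * ∑ i ∈ s, -Real.log (R i)
      ≤ Real.log (1 / #s * ∑ i ∈ s, (R i)⁻¹) := hjensen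
    _ ≤ Real.log (1 / #s * N) := Real.log_le_log (by positivity) (by gcongr)
    _ = Real.log N - Real.log #s := by
        rw [one_div_mul_eq_div, Real.log_div (hsum.trans_le hN).ne' hcard.ne']

section L2Inner

variable {M : Type*}

def l2Inner (x y : MonoidAlgebra ℝ M) : ℝ := x.coeff.sum fun g a => a * y.coeff g

lemma l2Inner_eq_sum {x y : MonoidAlgebra ℝ M} {s : Finset M} (hs : x.coeff.support ⊆ s) :
    l2Inner x y = ∑ g ∈ s, x.coeff g * y.coeff g :=
  Finsupp.sum_of_support_subset _ hs _ fun _ _ => zero_mul _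

lemma l2Inner_comm (x y : MonoidAlgebra ℝ M) : l2Inner x y = l2Inner y x := by
  rw [l2Inner_eq_sum (subset_union_left (s₂ := y.coeff.support)),
    l2Inner_eq_sum (subset_union_right (s₁ := x.coeff.support))]
  simp_rw [mul_comm]

lemma l2Inner_add_left (x y z : MonoidAlgebra ℝ M) :
    l2Inner (x + y) z = l2Inner x z + l2Inner y z :=
  Finsupp.sum_add_index' (fun _ => zero_mul _) fun _ _ _ => add_mul _ _ _

lemma l2Inner_sum_left {ι : Type*} (s : Finset ι) (x : ι → MonoidAlgebra ℝ M)
    (y : MonoidAlgebra ℝ M) : l2Inner (∑ i ∈ s, x i) y = ∑ i ∈ s, l2Inner (x i) y :=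
  map_sum (AddMonoidHom.mk' (l2Inner · y) fun x z => l2Inner_add_left x z y) x s

lemma l2Inner_single_right (x : MonoidAlgebra ℝ M) (g : M) :
    l2Inner x (single g 1) = x.coeff g := by
  rw [l2Inner_eq_sum (subset_insert g _), sum_eq_single_of_mem g (mem_insert_self _ _)]
  · simp
  · intro h _ hg; simp [hg]

lemma l2Inner_self_nonneg (x : MonoidAlgebra ℝ M) : 0 ≤ l2Inner x x :=
  Finset.sum_nonneg fun _ _ => mul_self_nonneg _

lemma l2Inner_sq_le (x y : MonoidAlgebra ℝ M) :
    l2Inner x y ^ 2 ≤ l2Inner x x * l2Inner y y := by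
  rw [l2Inner_eq_sum (subset_union_left (s₂ := y.coeff.support)),
    l2Inner_eq_sum (subset_union_left (s₂ := y.coeff.support)),
    l2Inner_eq_sum (subset_union_right (s₁ := x.coeff.support))]
  simpa only [sq] using
    sum_mul_sq_le_sq_mul_sq (x.coeff.support ∪ y.coeff.support) x.coeff y.coeff

lemma l2Inner_equiv (e : M ≃ M) {x x' y y' : MonoidAlgebra ℝ M}
    (hx : ∀ g, x'.coeff (e g) = x.coeff g) (hy : ∀ g, y'.coeff (e g) = y.coeff g) :
    l2Inner x' y' = l2Inner x y := by
  have hsupp : x'.coeff.support ⊆ x.coeff.support.map e.toEmbedding := fun g hg => by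
    simpa [← hx (e.symm g)] using hg
  rw [l2Inner_eq_sum hsupp, sum_map, l2Inner_eq_sum subset_rfl]
  simp [hx, hy]

end L2Inner

lemma l2Inner_single_mul_single_mul (a : G) (x y : MonoidAlgebra ℝ G) :
    l2Inner (single a 1 * x) (single a 1 * y) = l2Inner x y :=
  l2Inner_equiv (Equiv.mulLeft a) (by simp) (by simp)

lemma l2Inner_mul_single_mul_single (a : G) (x y : MonoidAlgebra ℝ G) :
    l2Inner (x * single a 1) (y * single a 1) = l2Inner x y :=
  l2Inner_equiv (Equiv.mulRight a) (by simp) (by simp)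

lemma l2Inner_single_mul_left (a : G) (x y : MonoidAlgebra ℝ G) :
    l2Inner (single a 1 * x) y = l2Inner x (single a⁻¹ 1 * y) := by
  have hy : y = single a 1 * (single a⁻¹ 1 * y) := by
    simp [← mul_assoc, single_mul_single, ← one_def]
  conv_lhs => rw [hy]
  exact l2Inner_single_mul_single_mul a x _

section ProductBound

variable {M : Type*} [Monoid M]

lemma l2Inner_prod_ofFn_self_le {n : ℕ} (a : Fin n → MonoidAlgebra ℝ M) (c : Fin n → ℝ)
    (hc : ∀ i, 0 ≤ c i) (ha : ∀ i x, l2Inner (a i * x) (a i * x) ≤ c i ^ 2 * l2Inner x x) :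
    l2Inner (List.ofFn a).prod (List.ofFn a).prod ≤ (∏ i, c i) ^ 2 := by
  induction n with
  | zero => simp [one_def, l2Inner_single_right]
  | succ n ih =>
    rw [List.ofFn_succ, List.prod_cons, Fin.prod_univ_succ, mul_pow]
    exact (ha 0 _).trans (mul_le_mul_of_nonneg_left (ih _ _ (fun _ => hc _) fun _ => ha _)
      (sq_nonneg _))

lemma abs_coeff_prod_ofFn_le {n : ℕ} (a : Fin n → MonoidAlgebra ℝ M) (c : Fin n → ℝ)
    (hc : ∀ i, 0 ≤ c i) (ha : ∀ i x, l2Inner (a i * x) (a i * x) ≤ c i ^ 2 * l2Inner x x)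
    (g : M) : |(List.ofFn a).prod.coeff g| ≤ ∏ i, c i := by
  refine abs_le_of_sq_le_sq ?_ (prod_nonneg fun i _ => hc i)
  have hcs := l2Inner_sq_le (List.ofFn a).prod (single g 1)
  rw [l2Inner_single_right, l2Inner_single_right, coeff_single, Finsupp.single_eq_same,
    mul_one] at hcs
  exact hcs.trans (l2Inner_prod_ofFn_self_le a c hc ha)

end ProductBound

section CayleyAdj

-- Left multiplication by `cayleyAdj F` is the adjacency operator of the Cayley graph of `(G, F)`.
def cayleyAdj (F : Finset G) : MonoidAlgebra ℝ G := ∑ s ∈ F, single s 1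

lemma prod_ofFn_cayleyAdj {n : ℕ} (A : Fin n → Finset G) :
    (List.ofFn fun i => cayleyAdj (A i)).prod =
      ∑ w ∈ Fintype.piFinset A, single (List.ofFn w).prod 1 := by
  induction n with
  | zero => simp [one_def]
  | succ n ih =>
    rw [List.ofFn_succ, List.prod_cons, ih, cayleyAdj, sum_mul_sum,
      ← filter_true (Fintype.piFinset A), filter_piFinset_eq_map_consEquiv A fun _ => True,
      sum_map, sum_product]
    simp only [single_mul_single, mul_one, filter_true, Function.Embedding.coeFn_mk,
      List.ofFn_succ, Fin.consEquiv_apply, Fin.cons_zero, Fin.cons_succ, List.prod_cons]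
    rfl

lemma coeff_prod_ofFn_cayleyAdj {n : ℕ} (A : Fin n → Finset G) (g : G) :
    (List.ofFn fun i => cayleyAdj (A i)).prod.coeff g =
      #{w ∈ Fintype.piFinset A | (List.ofFn w).prod = g} := by
  simp [prod_ofFn_cayleyAdj, coeff_sum, Finsupp.single_apply]

lemma coeff_cayleyAdj_pow_nonneg (F : Finset G) (m : ℕ) (g : G) :
    0 ≤ (cayleyAdj F ^ m).coeff g := by
  rw [← List.prod_replicate, ← List.ofFn_const, coeff_prod_ofFn_cayleyAdj]
  positivity

lemma coeff_cayleyAdj_pow_one (F : Finset G) (m : ℕ) :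
    (cayleyAdj F ^ m).coeff 1 = #(wordsIn F ⊥ m) := by
  rw [← List.prod_replicate, ← List.ofFn_const, coeff_prod_ofFn_cayleyAdj]
  simp [wordsIn]

variable {F : Finset G} (hF : ∀ s ∈ F, s⁻¹ ∈ F)
include hF

lemma l2Inner_cayleyAdj_mul_left (x y : MonoidAlgebra ℝ G) :
    l2Inner (cayleyAdj F * x) y = l2Inner x (cayleyAdj F * y) := by
  rw [cayleyAdj, sum_mul, l2Inner_sum_left, l2Inner_comm x, sum_mul, l2Inner_sum_left]
  exact sum_nbij' (·⁻¹) (·⁻¹) hF hF (fun _ _ => inv_inv _) (fun _ _ => inv_inv _)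
    fun _ _ => by rw [l2Inner_single_mul_left, l2Inner_comm]

lemma l2Inner_cayleyAdj_pow_mul_left (m : ℕ) (x y : MonoidAlgebra ℝ G) :
    l2Inner (cayleyAdj F ^ m * x) y = l2Inner x (cayleyAdj F ^ m * y) := by
  induction m generalizing x y with
  | zero => simp
  | succ m ih =>
    rw [pow_succ', mul_assoc, l2Inner_cayleyAdj_mul_left hF, ih, ← mul_assoc, ← pow_succ,
      pow_succ']

lemma l2Inner_cayleyAdj_pow_mul_self (m : ℕ) (x : MonoidAlgebra ℝ G) :
    l2Inner (cayleyAdj F ^ (m + m) * x) x =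
      l2Inner (cayleyAdj F ^ m * x) (cayleyAdj F ^ m * x) := by
  rw [pow_add, mul_assoc, l2Inner_cayleyAdj_pow_mul_left hF]

lemma l2Inner_cayleyAdj_pow_self (m : ℕ) :
    l2Inner (cayleyAdj F ^ m) (cayleyAdj F ^ m) = (cayleyAdj F ^ (m + m)).coeff 1 := by
  have h := l2Inner_cayleyAdj_pow_mul_self hF m 1
  rwa [mul_one, mul_one, one_def, l2Inner_single_right, eq_comm] at h

lemma coeff_cayleyAdj_pow_le_coeff_one (m : ℕ) (g : G) :
    (cayleyAdj F ^ (m + m)).coeff g ≤ (cayleyAdj F ^ (m + m)).coeff 1 := by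
  have hcoeff : (cayleyAdj F ^ (m + m)).coeff g =
      l2Inner (cayleyAdj F ^ m) (cayleyAdj F ^ m * single g 1) := by
    rw [← l2Inner_single_right, pow_add, l2Inner_cayleyAdj_pow_mul_left hF]
  have hcs := l2Inner_sq_le (cayleyAdj F ^ m) (cayleyAdj F ^ m * single g 1)
  rw [← hcoeff, l2Inner_mul_single_mul_single, l2Inner_cayleyAdj_pow_self hF, ← sq] at hcs
  exact (abs_le_of_sq_le_sq hcs (coeff_cayleyAdj_pow_nonneg F _ 1)).trans' (le_abs_self _)

end CayleyAdj

section ReturnProbability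

variable (F : Finset G)

lemma card_wordsIn_bot_le_pow (m : ℕ) : #(wordsIn F ⊥ m) ≤ #F ^ m :=
  (card_filter_le _ _).trans_eq (by simp)

lemma card_wordsIn_bot_zero : #(wordsIn F ⊥ 0) = 1 := by
  simp [wordsIn]

lemma card_wordsIn_bot_mul_le (a b : ℕ) :
    #(wordsIn F ⊥ a) * #(wordsIn F ⊥ b) ≤ #(wordsIn F ⊥ (a + b)) := by
  rw [← card_product]
  refine card_le_card_of_injOn (fun p => Fin.append p.1 p.2) ?_ ?_
  · rintro ⟨u, v⟩ huv
    simp only [wordsIn, coe_product, Set.mem_prod, mem_coe, mem_filter, Fintype.mem_piFinset,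
      Subgroup.mem_bot] at huv ⊢
    refine ⟨fun i => ?_, by simp [List.ofFn_fin_append, huv.1.2, huv.2.2]⟩
    cases i using Fin.addCases with
    | left j => simpa using huv.1.1 j
    | right j => simpa using huv.2.1 j
  · rintro ⟨u, v⟩ - ⟨u', v'⟩ - h
    simp only [Prod.mk.injEq]
    refine ⟨funext fun i => ?_, funext fun i => ?_⟩
    · simpa using congrFun h (Fin.castAdd b i)
    · simpa using congrFun h (Fin.natAdd a i)

lemma card_wordsIn_bot_pow_le (m k : ℕ) :
    #(wordsIn F ⊥ m) ^ k ≤ #(wordsIn F ⊥ (k * m)) := by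
  induction k with
  | zero => rw [pow_zero, zero_mul, card_wordsIn_bot_zero]
  | succ k ih =>
    rw [pow_succ, Nat.succ_mul]
    exact (Nat.mul_le_mul_right _ ih).trans (card_wordsIn_bot_mul_le F _ _)

def returnProb (j : ℕ) : ℝ := #(wordsIn F ⊥ (2 * j)) / (#F : ℝ) ^ (2 * j)

lemma returnProb_le_one (j : ℕ) : returnProb F j ≤ 1 :=
  div_le_one_of_le₀ (by exact_mod_cast card_wordsIn_bot_le_pow F _) (by positivity)

lemma pow_returnProb_le (j k : ℕ) : returnProb F j ^ k ≤ returnProb F (k * j) := by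
  rw [returnProb, returnProb, div_pow, ← pow_mul, mul_left_comm, mul_comm (2 * j)]
  gcongr
  exact_mod_cast card_wordsIn_bot_pow_le F _ k

variable {F} (hF : ∀ s ∈ F, s⁻¹ ∈ F) (hne : F.Nonempty)
include hF hne

lemma returnProb_pos (j : ℕ) : 0 < returnProb F j := by
  obtain ⟨s, hs⟩ := id hne
  have h2 : 0 < #(wordsIn F ⊥ 2) :=
    card_pos.2 ⟨![s, s⁻¹], by simp [wordsIn, hs, hF s hs, Fin.forall_fin_two]⟩
  have h2j : 0 < #(wordsIn F ⊥ (2 * j)) :=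
    (pow_pos h2 j).trans_le (mul_comm j 2 ▸ card_wordsIn_bot_pow_le F 2 j)
  exact div_pos (by exact_mod_cast h2j) (pow_pos (by exact_mod_cast card_pos.2 hne) _)

lemma returnProb_rpow_le_specRad {m : ℕ} (hm : m ≠ 0) :
    returnProb F m ^ (1 / (2 * (m : ℝ))) ≤ specRad F ⊥ := by
  -- No limit is needed: by `pow_returnProb_le`, the `m`-th term is below every `k m`-th term.
  rw [specRad, if_pos hne]
  refine le_limsup_of_frequently_le (frequently_atTop.2 fun N => ⟨(N + 1) * m, ?_, ?_⟩) ?_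
  · exact (Nat.le_succ N).trans (Nat.le_mul_of_pos_right _ (Nat.pos_of_ne_zero hm))
  · calc returnProb F m ^ (1 / (2 * (m : ℝ)))
        = (returnProb F m ^ (N + 1)) ^ (1 / (2 * (((N + 1) * m : ℕ) : ℝ))) := by
          rw [← Real.rpow_natCast, ← Real.rpow_mul (returnProb_pos hF hne m).le]
          congr 1
          push_cast
          field_simp
      _ ≤ _ := by
          gcongr
          · exact pow_nonneg (returnProb_pos hF hne m).le _
          · exact pow_returnProb_le F m (N + 1)
  · exact isBoundedUnder_of ⟨1, fun j => Real.rpow_le_one (returnProb_pos hF hne j).le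
      (returnProb_le_one F j) (by positivity)⟩

lemma specRad_pos : 0 < specRad F ⊥ :=
  (Real.rpow_pos_of_pos (returnProb_pos hF hne 1) _).trans_le
    (returnProb_rpow_le_specRad hF hne one_ne_zero)

lemma card_wordsIn_bot_two_mul_le (m : ℕ) :
    (#(wordsIn F ⊥ (2 * m)) : ℝ) ≤ (specRad F ⊥ * #F) ^ (2 * m) := by
  rcases eq_or_ne m 0 with rfl | hm
  · simp [card_wordsIn_bot_zero]
  have hroot : (returnProb F m ^ (((2 * m : ℕ) : ℝ)⁻¹)) ^ (2 * m) = returnProb F m :=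
    Real.rpow_inv_natCast_pow (returnProb_pos hF hne m).le (by positivity)
  have hle := pow_le_pow_left₀ (Real.rpow_nonneg (returnProb_pos hF hne m).le _)
    (returnProb_rpow_le_specRad hF hne hm) (2 * m)
  rw [one_div, ← Nat.cast_ofNat, ← Nat.cast_mul, hroot, returnProb,
    div_le_iff₀ (pow_pos (by exact_mod_cast card_pos.2 hne) _)] at hle
  rwa [mul_pow]

end ReturnProbability

lemma l2Inner_mul_le {a : MonoidAlgebra ℝ G} {C : ℝ} (ha : ∀ g, |a.coeff g| ≤ C)
    (x : MonoidAlgebra ℝ G) :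
    l2Inner (a * x) x ≤ C * (∑ g ∈ x.coeff.support, |x.coeff g|) ^ 2 := by
  rw [l2Inner_comm, l2Inner_eq_sum subset_rfl, sq, sum_mul_sum, mul_sum]
  refine sum_le_sum fun g _ => ?_
  rw [coeff_mul_apply_right, Finsupp.sum, mul_sum, mul_sum]
  refine sum_le_sum fun h _ => ?_
  calc x.coeff g * (a.coeff (g * h⁻¹) * x.coeff h)
      ≤ |x.coeff g| * (|a.coeff (g * h⁻¹)| * |x.coeff h|) := by
        rw [← abs_mul, ← abs_mul]; exact le_abs_self _
    _ ≤ |x.coeff g| * (C * |x.coeff h|) := by gcongr; exact ha _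
    _ = C * (|x.coeff g| * |x.coeff h|) := by ring

section NormBound

variable {F : Finset G} (hF : ∀ s ∈ F, s⁻¹ ∈ F)
include hF

lemma abs_coeff_cayleyAdj_pow_le (m : ℕ) (g : G) :
    |(cayleyAdj F ^ (2 * m)).coeff g| ≤ #(wordsIn F ⊥ (2 * m)) := by
  rw [abs_of_nonneg (coeff_cayleyAdj_pow_nonneg F _ g), ← coeff_cayleyAdj_pow_one, two_mul]
  exact coeff_cayleyAdj_pow_le_coeff_one hF m g

variable (hne : F.Nonempty)
include hne

lemma l2Inner_cayleyAdj_mul_self_le (x : MonoidAlgebra ℝ G) :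
    l2Inner (cayleyAdj F * x) (cayleyAdj F * x) ≤ (specRad F ⊥ * #F) ^ 2 * l2Inner x x := by
  -- `b k = ‖χ^{2^k} x‖²` with `χ = cayleyAdj F`: Cauchy–Schwarz gives `b k ^ 2 ≤ b (k + 1) ‖x‖²`,
  -- while `b k ≤ |A(2^{k+1}, F)| ‖x‖₁²`.
  have hb0 : l2Inner (cayleyAdj F ^ (2 * 2 ^ 0) * x) x =
      l2Inner (cayleyAdj F * x) (cayleyAdj F * x) := by
    simpa using l2Inner_cayleyAdj_pow_mul_self hF 1 x
  rw [← hb0]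
  refine le_mul_of_sq_le_mul_succ (b := fun k => l2Inner (cayleyAdj F ^ (2 * 2 ^ k) * x) x)
    (C := (∑ g ∈ x.coeff.support, |x.coeff g|) ^ 2)
    (pow_pos (mul_pos (specRad_pos hF hne) (by exact_mod_cast card_pos.2 hne)) 2)
    (l2Inner_self_nonneg x) (hb0 ▸ l2Inner_self_nonneg _) (fun k => ?_) (fun k => ?_)
  · rw [show 2 * 2 ^ (k + 1) = 2 * 2 ^ k + 2 * 2 ^ k by ring, l2Inner_cayleyAdj_pow_mul_self hF]
    exact l2Inner_sq_le _ _
  · calc l2Inner (cayleyAdj F ^ (2 * 2 ^ k) * x) x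
        ≤ #(wordsIn F ⊥ (2 * 2 ^ k)) * (∑ g ∈ x.coeff.support, |x.coeff g|) ^ 2 :=
          l2Inner_mul_le (abs_coeff_cayleyAdj_pow_le hF _) x
      _ ≤ (specRad F ⊥ * #F) ^ (2 * 2 ^ k) * (∑ g ∈ x.coeff.support, |x.coeff g|) ^ 2 := by
          gcongr
          exact card_wordsIn_bot_two_mul_le hF hne _
      _ = _ := by rw [pow_mul, mul_comm]

end NormBound

section CosetPath

variable (H : Subgroup G)

lemma mk_rightRel_eq_iff {a b : G} :
    Quotient.mk (QuotientGroup.rightRel H) a = Quotient.mk _ b ↔ b * a⁻¹ ∈ H :=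
  Quotient.eq.trans QuotientGroup.rightRel_apply

lemma mk_rightRel_mul {a b : G} (h : Quotient.mk (QuotientGroup.rightRel H) a = Quotient.mk _ b)
    (g : G) : Quotient.mk (QuotientGroup.rightRel H) (a * g) = Quotient.mk _ (b * g) := by
  rw [mk_rightRel_eq_iff] at h ⊢
  simpa [mul_assoc] using h

lemma mem_conjSubgroup {a x : G} : x ∈ conjSubgroup a H ↔ a * x * a⁻¹ ∈ H := by
  rw [conjSubgroup, Subgroup.mem_map_equiv]
  simp [mul_assoc]

lemma mk_rightRel_mul_eq_iff {a g : G} :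
    Quotient.mk (QuotientGroup.rightRel H) (a * g) = Quotient.mk _ a ↔
      g ∈ conjSubgroup a H := by
  rw [mk_rightRel_eq_iff, mem_conjSubgroup, ← inv_mem_iff]
  simp [mul_assoc]

lemma conjSubgroup_eq_of_mk_eq {a b : G}
    (h : Quotient.mk (QuotientGroup.rightRel H) a = Quotient.mk _ b) :
    conjSubgroup a H = conjSubgroup b H := by
  ext x
  rw [← mk_rightRel_mul_eq_iff, ← mk_rightRel_mul_eq_iff, mk_rightRel_mul H h, h]

variable {n : ℕ}

lemma prefixProd_succ (w : Fin n → G) {m : ℕ} (hm : m < n) :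
    prefixProd w (m + 1) = prefixProd w m * w ⟨m, hm⟩ := by
  rw [prefixProd, prefixProd, List.prod_take_succ _ _ (by simpa)]
  simp

lemma prefixProd_of_le (w : Fin n → G) {m : ℕ} (hm : n ≤ m) :
    prefixProd w m = (List.ofFn w).prod := by
  rw [prefixProd, List.take_of_length_le (by simpa)]

-- Step `i : Fin n` is the paper's time `t = i + 1`, and `StaysInCoset H w i` says `t ∈ T(w)`.
def walkCoset (w : Fin n → G) (m : ℕ) : Quotient (QuotientGroup.rightRel H) :=
  Quotient.mk _ (prefixProd w m)

def StaysInCoset (w : Fin n → G) (i : Fin n) : Prop :=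
  walkCoset H w (i + 1) = walkCoset H w i

lemma staysInCoset_iff {w : Fin n → G} {i : Fin n} :
    StaysInCoset H w i ↔ w i ∈ conjSubgroup (prefixProd w i) H := by
  rw [StaysInCoset, walkCoset, walkCoset, prefixProd_succ w i.isLt, mk_rightRel_mul_eq_iff]

lemma walkCoset_eq_of_forall {w w' : Fin n → G}
    (h : ∀ i : Fin n, walkCoset H w i = walkCoset H w' i →
      w i = w' i ∨ StaysInCoset H w i ∧ StaysInCoset H w' i) :
    walkCoset H w = walkCoset H w' := by
  funext m
  induction m with
  | zero => rfl
  | succ m ih =>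
    by_cases hm : m < n
    · obtain hw | ⟨hs, hs'⟩ := h ⟨m, hm⟩ ih
      · simpa only [walkCoset, prefixProd_succ _ hm, hw] using
          mk_rightRel_mul H ih (w' ⟨m, hm⟩)
      · exact hs.trans (ih.trans hs'.symm)
    · have hnm : n ≤ m := not_lt.1 hm
      simpa only [walkCoset, prefixProd_of_le _ hnm, prefixProd_of_le _ (hnm.trans m.le_succ)]
        using ih

def skeleton (w : Fin n → G) : Fin n → Option G :=
  fun i => if StaysInCoset H w i then none else some (w i)

lemma walkCoset_eq_of_skeleton_eq {w w' : Fin n → G} (h : skeleton H w = skeleton H w') :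
    walkCoset H w = walkCoset H w' := by
  refine walkCoset_eq_of_forall H fun i _ => ?_
  have hi := congrFun h i
  simp only [skeleton] at hi
  split_ifs at hi with hs hs'
  · exact .inr ⟨hs, hs'⟩
  · exact .inl (Option.some.inj hi)

lemma staysInCoset_iff_of_walkCoset_eq {w w' : Fin n → G} (h : walkCoset H w = walkCoset H w')
    (i : Fin n) : StaysInCoset H w i ↔ StaysInCoset H w' i := by
  rw [StaysInCoset, StaysInCoset, h]

lemma prod_mem_iff_of_skeleton_eq {w w' : Fin n → G} (h : skeleton H w = skeleton H w') :
    (List.ofFn w).prod ∈ H ↔ (List.ofFn w').prod ∈ H := by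
  have hn := congrFun (walkCoset_eq_of_skeleton_eq H h) n
  simp only [walkCoset, prefixProd_of_le _ le_rfl] at hn
  rw [← mul_one (List.ofFn w).prod, ← inv_one, ← mk_rightRel_eq_iff, hn, mk_rightRel_eq_iff,
    inv_one, mul_one]

variable (S : Finset G)

def stepSet (w : Fin n → G) (i : Fin n) : Finset G :=
  if StaysInCoset H w i then S.filter (· ∈ conjSubgroup (prefixProd w i) H) else {w i}

lemma mem_stepSet_self {w : Fin n → G} {i : Fin n} (hw : w i ∈ S) :
    w i ∈ stepSet H S w i := by
  unfold stepSet
  split_ifs with hs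
  · exact mem_filter.2 ⟨hw, (staysInCoset_iff H).1 hs⟩
  · exact mem_singleton_self _

lemma stepSet_subset {w : Fin n → G} {i : Fin n} (hw : w i ∈ S) : stepSet H S w i ⊆ S := by
  unfold stepSet
  split_ifs
  · exact filter_subset _ _
  · exact singleton_subset_iff.2 hw

lemma stepSet_eq_of_skeleton_eq {w w' : Fin n → G} (h : skeleton H w = skeleton H w') :
    stepSet H S w = stepSet H S w' := by
  have hc := walkCoset_eq_of_skeleton_eq H h
  funext i
  have hi := congrFun h i
  simp only [stepSet, skeleton, staysInCoset_iff_of_walkCoset_eq H hc i] at hi ⊢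
  split_ifs at hi ⊢ with hs
  · rw [conjSubgroup_eq_of_mk_eq H (congrFun hc i)]
  · rw [Option.some.inj hi]

lemma filter_skeleton_eq_piFinset {w₀ : Fin n → G} (hw₀ : ∀ i, w₀ i ∈ S) :
    {w ∈ Fintype.piFinset fun _ : Fin n => S | skeleton H w = skeleton H w₀} =
      Fintype.piFinset (stepSet H S w₀) := by
  ext w
  simp only [mem_filter, Fintype.mem_piFinset]
  constructor
  · rintro ⟨hS, hsk⟩ i
    exact stepSet_eq_of_skeleton_eq H S hsk ▸ mem_stepSet_self H S (hS i)
  · intro hw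
    have hc : walkCoset H w₀ = walkCoset H w := by
      refine walkCoset_eq_of_forall H fun i hi => ?_
      have hwi := hw i
      unfold stepSet at hwi
      split_ifs at hwi with hs
      · refine .inr ⟨hs, (staysInCoset_iff H).2 ?_⟩
        rw [← conjSubgroup_eq_of_mk_eq H hi]
        exact (mem_filter.1 hwi).2
      · exact .inl (mem_singleton.1 hwi).symm
    refine ⟨fun i => stepSet_subset H S (hw₀ i) (hw i), funext fun i => ?_⟩
    have hwi := hw i
    simp only [stepSet, skeleton, staysInCoset_iff_of_walkCoset_eq H hc i] at hwi ⊢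
    split_ifs at hwi ⊢
    · rfl
    · rw [mem_singleton.1 hwi]

end CosetPath

section WalkWeight

variable (S : Finset G) (H : Subgroup G) {n : ℕ}

def stepRad (w : Fin n → G) (i : Fin n) : ℝ :=
  if StaysInCoset H w i then specRad (stepSet H S w i) ⊥ else 1

def walkWeight (w : Fin n → G) : ℝ := ∏ i, stepRad S H w i

lemma walkWeight_eq_of_skeleton_eq {w w' : Fin n → G} (h : skeleton H w = skeleton H w') :
    walkWeight S H w = walkWeight S H w' := by
  simp only [walkWeight, stepRad, stepSet_eq_of_skeleton_eq H S h,
    staysInCoset_iff_of_walkCoset_eq H (walkCoset_eq_of_skeleton_eq H h)]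

lemma filter_wordsIn_skeleton_eq {w₀ : Fin n → G} (hw₀ : (List.ofFn w₀).prod ∈ H) :
    {w ∈ wordsIn S H n | skeleton H w = skeleton H w₀} =
      {w ∈ Fintype.piFinset fun _ : Fin n => S | skeleton H w = skeleton H w₀} := by
  rw [wordsIn, filter_filter]
  exact filter_congr fun w _ =>
    and_iff_right_of_imp fun h => (prod_mem_iff_of_skeleton_eq H h).2 hw₀

variable {S} (hS : ∀ s ∈ S, s⁻¹ ∈ S)
include hS

lemma inv_mem_stepSet {w : Fin n → G} {i : Fin n} (hs : StaysInCoset H w i) {s : G}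
    (h : s ∈ stepSet H S w i) : s⁻¹ ∈ stepSet H S w i := by
  simp only [stepSet, if_pos hs, mem_filter] at h ⊢
  exact ⟨hS s h.1, inv_mem h.2⟩

lemma specRad_stepSet_pos {w : Fin n → G} {i : Fin n} (hw : w i ∈ S) (hs : StaysInCoset H w i) :
    0 < specRad (stepSet H S w i) ⊥ :=
  specRad_pos (fun _ => inv_mem_stepSet H hS hs) ⟨w i, mem_stepSet_self H S hw⟩

lemma stepRad_pos {w : Fin n → G} {i : Fin n} (hw : w i ∈ S) : 0 < stepRad S H w i := by
  unfold stepRad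
  split_ifs with hs
  · exact specRad_stepSet_pos H hS hw hs
  · exact one_pos

lemma walkWeight_pos {w : Fin n → G} (hw : ∀ i, w i ∈ S) : 0 < walkWeight S H w :=
  prod_pos fun i _ => stepRad_pos H hS (hw i)

lemma sum_neg_log_specRad_eq {w : Fin n → G} (hw : ∀ i, w i ∈ S) :
    ∑ t ∈ Icc 1 n with (prefixProd w (t - 1))⁻¹ * prefixProd w t ∈
        conjSubgroup (prefixProd w (t - 1)) H,
      -Real.log (specRad (S.filter fun a => a ∈ conjSubgroup (prefixProd w t) H) ⊥) =
      -Real.log (walkWeight S H w) := by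
  rw [sum_filter_Icc_one_eq_sum_fin, walkWeight,
    Real.log_prod fun i _ => (stepRad_pos H hS (hw i)).ne', ← sum_neg_distrib]
  refine sum_congr rfl fun i _ => ?_
  have hcond : (prefixProd w (i + 1 - 1))⁻¹ * prefixProd w (i + 1) ∈
      conjSubgroup (prefixProd w (i + 1 - 1)) H ↔ StaysInCoset H w i := by
    simp only [Nat.add_sub_cancel, prefixProd_succ w i.isLt, inv_mul_cancel_left, Fin.eta,
      staysInCoset_iff]
  rw [if_congr hcond rfl rfl, stepRad]
  split_ifs with hs
  · rw [stepSet, if_pos hs, conjSubgroup_eq_of_mk_eq H hs]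
  · simp

lemma card_filter_skeleton_le {w₀ : Fin n → G} (hw₀ : ∀ i, w₀ i ∈ S) :
    (#{w ∈ wordsIn S ⊥ n | skeleton H w = skeleton H w₀} : ℝ) ≤
      walkWeight S H w₀ *
        #{w ∈ Fintype.piFinset fun _ : Fin n => S | skeleton H w = skeleton H w₀} := by
  have hfib := filter_skeleton_eq_piFinset H S hw₀
  have hret : {w ∈ wordsIn S ⊥ n | skeleton H w = skeleton H w₀} =
      {w ∈ Fintype.piFinset (stepSet H S w₀) | (List.ofFn w).prod = 1} := by
    rw [← hfib, wordsIn, filter_filter, filter_filter]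
    exact filter_congr fun w _ => by rw [Subgroup.mem_bot, and_comm]
  rw [hret, hfib, ← coeff_prod_ofFn_cayleyAdj, Fintype.card_piFinset, Nat.cast_prod, walkWeight,
    ← prod_mul_distrib]
  refine (le_abs_self _).trans (abs_coeff_prod_ofFn_le _ _ (fun i => ?_) (fun i x => ?_) 1)
  · exact mul_nonneg (stepRad_pos H hS (hw₀ i)).le (Nat.cast_nonneg _)
  · unfold stepRad
    split_ifs with hs
    · exact l2Inner_cayleyAdj_mul_self_le (fun _ => inv_mem_stepSet H hS hs)
        ⟨w₀ i, mem_stepSet_self H S (hw₀ i)⟩ x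
    · simp [stepSet, hs, cayleyAdj, l2Inner_single_mul_single_mul]

end WalkWeight

theorem log_card_walks_estimate_general
    (S : Finset G)
    (hsymm : ∀ s ∈ S, s⁻¹ ∈ S) (H : Subgroup G)
    (n : ℕ) (hne : (wordsIn S ⊥ n).Nonempty) :
    Real.log ((wordsIn S H n).card : ℝ) - Real.log ((wordsIn S ⊥ n).card : ℝ) ≥
      (1 / ((wordsIn S ⊥ n).card : ℝ)) *
        ∑ w ∈ wordsIn S ⊥ n,
          ∑ t ∈ (Finset.Icc 1 n).filter
              (fun t => (prefixProd w (t - 1))⁻¹ * prefixProd w t ∈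
                conjSubgroup (prefixProd w (t - 1)) H),
            (-Real.log (specRad (S.filter fun a => a ∈ conjSubgroup (prefixProd w t) H) ⊥)) := by
  have hS : ∀ w ∈ wordsIn S ⊥ n, ∀ i, w i ∈ S := fun w hw =>
    Fintype.mem_piFinset.1 (mem_filter.1 hw).1
  have hweight : ∀ w ∈ wordsIn S ⊥ n, 0 < walkWeight S H w := fun w hw =>
    walkWeight_pos H hsymm (hS w hw)
  rw [ge_iff_le, sum_congr rfl fun w hw => sum_neg_log_specRad_eq H hsymm (hS w hw)]
  refine mul_sum_neg_log_le hne hweight <| sum_inv_le_card_of_card_fiber_le (skeleton H) hweight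
    (fun _ _ _ _ h => walkWeight_eq_of_skeleton_eq S H h) fun w hw => ?_
  have hw1 : (List.ofFn w).prod ∈ H := Subgroup.mem_bot.1 (mem_filter.1 hw).2 ▸ H.one_mem
  rw [filter_wordsIn_skeleton_eq S H hw1]
  exact card_filter_skeleton_le H hsymm (hS w hw)

/-- **Key estimate in the proof of the spectral radius inequality.** For `n ≥ 1` with
`A(n,S) ≠ ∅` and `T(w) = {t ∈ {1,…,n} : a_t ∈ H^{w(t−1)}}` (the times at which the walk
does not change `H`-coset),
`log|A_H(n,S)| − log|A(n,S)| ≥ (1/|A(n,S)|) Σ_{w∈A(n,S)} Σ_{t∈T(w)} (−log ρ(H^{w(t)}, H^{w(t)} ∩ S))`. -/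
theorem log_card_walks_estimate [Countable G]
    (S : Finset G) (hgen : Subgroup.closure (S : Set G) = ⊤)
    (hsymm : ∀ s ∈ S, s⁻¹ ∈ S) (H : Subgroup G)
    (n : ℕ) (hn : 1 ≤ n) (hne : (wordsIn S ⊥ n).Nonempty) :
    Real.log ((wordsIn S H n).card : ℝ) - Real.log ((wordsIn S ⊥ n).card : ℝ) ≥
      (1 / ((wordsIn S ⊥ n).card : ℝ)) *
        ∑ w ∈ wordsIn S ⊥ n,
          ∑ t ∈ (Finset.Icc 1 n).filter
              (fun t => (prefixProd w (t - 1))⁻¹ * prefixProd w t ∈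
                conjSubgroup (prefixProd w (t - 1)) H),
            (-Real.log (specRad (S.filter fun a => a ∈ conjSubgroup (prefixProd w t) H) ⊥)) :=
  log_card_walks_estimate_general S hsymm H n hne
end
end

section
/- For every d ≥ 2 and k ≥ 1 there exists β = β(k,d) < 1 with the following property. Let F_d be the free group on d generators with standard symmetric generating set S, and let H be a subgroup of F_d such that H ∩ S^k contains two elements a, b generating a free subgroup of rank 2. Then ρ(⟨H ∩ S^k⟩, H ∩ S^k) ≤ β. -/
open Filter
open scoped Classical

noncomputable section

variable {G : Type*} [Group G]

open Pointwise

/-- The standard symmetric generating set of the free group on `d` generators: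
the free generators together with their inverses (`|S| = 2d`). -/
def stdGens (d : ℕ) : Finset (FreeGroup (Fin d)) :=
  (Finset.univ.image fun i : Fin d => FreeGroup.of i) ∪
    (Finset.univ.image fun i : Fin d => (FreeGroup.of i)⁻¹)


/- ===== auxiliary development ===== -/

namespace SGPF

open FreeGroup

abbrev F2 := FreeGroup (Fin 2)

/-- the four single-letter elements of `F2` -/
def Y4 : Finset F2 := {FreeGroup.of 0, (FreeGroup.of 0)⁻¹, FreeGroup.of 1, (FreeGroup.of 1)⁻¹}

lemma toWord_letter (i : Fin 2) : (FreeGroup.of i).toWord = [(i, true)] := toWord_of i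

lemma of_eq_mk (i : Fin 2) : FreeGroup.of i = FreeGroup.mk [(i, true)] := rfl

lemma inv_of_eq_mk (i : Fin 2) : (FreeGroup.of i)⁻¹ = FreeGroup.mk [(i, false)] := by
  rw [of_eq_mk, inv_mk]
  simp [invRev]

lemma toWord_inv_letter (i : Fin 2) : ((FreeGroup.of i)⁻¹).toWord = [(i, false)] := by
  rw [inv_of_eq_mk, toWord_mk, reduce_singleton]

/-- norm of a single letter times `u` -/
lemma norm_letter_mul (i : Fin 2) (c : Bool) (u : F2) :
    (FreeGroup.mk [(i, c)] * u).norm = (FreeGroup.reduce ((i,c) :: u.toWord)).length := by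
  have : FreeGroup.mk [(i, c)] * u = FreeGroup.mk ((i,c) :: u.toWord) := by
    conv_lhs => rw [← mk_toWord (x := u)]
    rw [mul_mk]
    rfl
  rw [this]
  rfl

end SGPF

namespace SGPF
open FreeGroup

/-- the weight ratio -/
def rr : ℝ := (Real.sqrt 3)⁻¹

lemma sqrt3_pos : (0:ℝ) < Real.sqrt 3 := Real.sqrt_pos.2 (by norm_num)

lemma rr_pos : 0 < rr := inv_pos.2 sqrt3_pos

lemma rr_mul_self : rr * rr = 3⁻¹ := by
  rw [rr, ← mul_inv]
  rw [Real.mul_self_sqrt (by norm_num : (3:ℝ) ≥ 0)]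

lemma sqrt3_mul_rr : Real.sqrt 3 * rr = 1 := mul_inv_cancel₀ (ne_of_gt sqrt3_pos)

lemma ne01 : FreeGroup.of (0 : Fin 2) ≠ FreeGroup.of 1 := by
  intro h; have := congrArg toWord h; simp [toWord_letter] at this

lemma Y4_distinct : ∀ (i j : Fin 2) (c c' : Bool), (i, c) ≠ (j, c') →
    FreeGroup.mk [(i,c)] ≠ FreeGroup.mk [(j,c')] := by
  intro i j c c' hne h
  have := congrArg toWord h
  rw [toWord_mk, toWord_mk, reduce_singleton, reduce_singleton] at this
  exact hne (by injection this)

lemma sum_Y4 (f : F2 → ℝ) :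
    ∑ y ∈ Y4, f y = f (FreeGroup.mk [(0,true)]) + f (FreeGroup.mk [(0,false)])
      + f (FreeGroup.mk [(1,true)]) + f (FreeGroup.mk [(1,false)]) := by
  have e0 : FreeGroup.of (0 : Fin 2) = FreeGroup.mk [(0,true)] := rfl
  have e1 : FreeGroup.of (1 : Fin 2) = FreeGroup.mk [(1,true)] := rfl
  have e0' : (FreeGroup.of (0 : Fin 2))⁻¹ = FreeGroup.mk [(0,false)] := inv_of_eq_mk 0
  have e1' : (FreeGroup.of (1 : Fin 2))⁻¹ = FreeGroup.mk [(1,false)] := inv_of_eq_mk 1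
  have h01 : ((0 : Fin 2), true) ≠ ((0 : Fin 2), false) := by simp
  rw [Y4, e0', e1', e0, e1]
  rw [show ({FreeGroup.mk [(0,true)], FreeGroup.mk [(0,false)], FreeGroup.mk [(1,true)],
      FreeGroup.mk [(1,false)]} : Finset F2)
    = insert (FreeGroup.mk [(0,true)]) (insert (FreeGroup.mk [(0,false)])
        (insert (FreeGroup.mk [(1,true)]) {FreeGroup.mk [(1,false)]})) from rfl]
  rw [Finset.sum_insert (by
      simp only [Finset.mem_insert, Finset.mem_singleton]
      push_neg
      exact ⟨Y4_distinct _ _ _ _ (by simp), Y4_distinct _ _ _ _ (by simp),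
        Y4_distinct _ _ _ _ (by simp)⟩),
    Finset.sum_insert (by
      simp only [Finset.mem_insert, Finset.mem_singleton]
      push_neg
      exact ⟨Y4_distinct _ _ _ _ (by simp), Y4_distinct _ _ _ _ (by simp)⟩),
    Finset.sum_insert (by
      simp only [Finset.mem_singleton]
      exact Y4_distinct _ _ _ _ (by simp))]
  rw [Finset.sum_singleton]
  ring

/-- The key tree estimate in `F2`. -/
lemma treeFact (u : F2) :
    ∑ y ∈ Y4, rr ^ (y * u).norm ≤ 2 * Real.sqrt 3 * rr ^ u.norm := by
  rw [sum_Y4 (fun y => rr ^ (y * u).norm)]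
  have hred : FreeGroup.reduce u.toWord = u.toWord := reduce_toWord u
  have hnu : u.norm = u.toWord.length := rfl
  rcases h : u.toWord with _ | ⟨⟨j, cb⟩, t⟩
  · -- u = 1
    have hn : ∀ (i : Fin 2) (c : Bool), (FreeGroup.mk [(i,c)] * u).norm = 1 := by
      intro i c
      rw [norm_letter_mul, h]
      rfl
    simp only [hn, hnu, h, List.length_nil, pow_zero, pow_one]
    nlinarith [sqrt3_pos, rr_mul_self, sqrt3_mul_rr, rr_pos]
  · -- u starts with letter (j, cb)
    have hn : ∀ (i : Fin 2) (c : Bool), (FreeGroup.mk [(i,c)] * u).norm =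
        if i = j ∧ c = !cb then t.length else t.length + 2 := by
      intro i c
      rw [norm_letter_mul, reduce.cons, hred, h]
      by_cases hic : i = j ∧ c = !cb
      · simp [hic]
      · simp only [hic, if_neg hic]
        simp [hic]
    have key : ∀ m : ℕ, rr ^ m + 3 * rr ^ (m+2) = 2 * Real.sqrt 3 * rr ^ (m+1) := by
      intro m
      have h1 : rr ^ (m+2) = rr ^ m * (rr * rr) := by ring
      have h2 : rr ^ (m+1) = rr ^ m * rr := by ring
      rw [h1, h2, rr_mul_self]
      linear_combination (-2 * rr ^ m) * sqrt3_mul_rr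
    have hnu' : rr ^ u.norm = rr ^ (t.length + 1) := by rw [hnu, h]; rfl
    fin_cases j <;> cases cb <;>
      simp only [hn, if_pos, if_neg, hnu'] <;>
      · norm_num
        rw [← key t.length]
        ring_nf
        norm_num

end SGPF

namespace SGPF
open FreeGroup Pointwise

variable {G : Type*} [Group G] (L : F2 →* G)

/-- coset representative for `L.range · h` -/
def rep (h : G) : G := (Quotient.mk (QuotientGroup.rightRel L.range) h).out

lemma rep_spec (h : G) : h * (rep L h)⁻¹ ∈ L.range := by
  have h1 : Quotient.mk (QuotientGroup.rightRel L.range) (rep L h)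
      = Quotient.mk (QuotientGroup.rightRel L.range) h := Quotient.out_eq _
  have h2 := Quotient.exact h1
  exact (QuotientGroup.rightRel_apply).1 h2

lemma rep_mul (y : F2) (h : G) : rep L (L y * h) = rep L h := by
  unfold rep
  congr 1
  exact Quotient.sound (QuotientGroup.rightRel_apply.mpr (by simpa using ⟨y⁻¹, by simp⟩))

/-- the `F2`-coordinate of `h` inside its coset -/
def delta (h : G) : F2 := Function.invFun L (h * (rep L h)⁻¹)

lemma L_delta (hL : Function.Injective L) (h : G) : L (delta L h) = h * (rep L h)⁻¹ := by
  obtain ⟨w, hw⟩ := rep_spec L h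
  rw [delta, ← hw, Function.leftInverse_invFun hL w, hw]

lemma delta_mul (hL : Function.Injective L) (y : F2) (h : G) : delta L (L y * h) = y * delta L h := by
  apply hL
  rw [L_delta L hL, rep_mul, map_mul L y (delta L h), L_delta L hL, mul_assoc]

/-- weight on `G` -/
def phi (h : G) : ℝ := rr ^ (delta L h).norm

lemma phi_pos (h : G) : 0 < phi L h := pow_pos rr_pos _

/-- four free letters in `G` -/
def F4 : Finset G := Y4.image L

lemma rowBound (hL : Function.Injective L) (h : G) : ∑ x ∈ F4 L, phi L (x * h) ≤ 2 * Real.sqrt 3 * phi L h := by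
  rw [F4, Finset.sum_image (fun y _ z _ h => hL h)]
  have : ∀ y ∈ Y4, phi L (L y * h) = rr ^ (y * delta L h).norm := by
    intro y _
    rw [phi, delta_mul L hL]
  rw [Finset.sum_congr rfl this]
  exact treeFact (delta L h)

lemma Y4_inv_mem {y : F2} (hy : y ∈ Y4) : y⁻¹ ∈ Y4 := by
  simp only [Y4, Finset.mem_insert, Finset.mem_singleton] at hy ⊢
  rcases hy with h | h | h | h <;> simp [h]

lemma F4_inv_mem {x : G} (hx : x ∈ F4 L) : x⁻¹ ∈ F4 L := by
  simp only [F4, Finset.mem_image] at hx ⊢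
  obtain ⟨y, hy, rfl⟩ := hx
  exact ⟨y⁻¹, Y4_inv_mem hy, map_inv L y⟩

lemma rowBound_inv (hL : Function.Injective L) (h : G) : ∑ x ∈ F4 L, phi L (x⁻¹ * h) ≤ 2 * Real.sqrt 3 * phi L h := by
  have : ∑ x ∈ F4 L, phi L (x⁻¹ * h) = ∑ x ∈ F4 L, phi L (x * h) :=
    Finset.sum_nbij' (fun x => x⁻¹) (fun x => x⁻¹)
      (fun x hx => F4_inv_mem L hx) (fun x hx => F4_inv_mem L hx)
      (fun x _ => inv_inv x) (fun x _ => inv_inv x) (fun x _ => rfl)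
  rw [this]
  exact rowBound L hL h

end SGPF

namespace SGPF
open FreeGroup Pointwise Finsupp

variable {G : Type*} [Group G]

/-- the energy (squared ℓ² norm) of a finitely supported function -/
def En (v : G →₀ ℝ) : ℝ := ∑ h ∈ v.support, (v h) ^ 2

lemma En_eq_sum {v : G →₀ ℝ} {B : Finset G} (hB : v.support ⊆ B) :
    En v = ∑ h ∈ B, (v h) ^ 2 := by
  refine Finset.sum_subset hB ?_
  intro h _ hh
  rw [notMem_support_iff.1 hh]
  norm_num

lemma En_nonneg (v : G →₀ ℝ) : 0 ≤ En v :=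
  Finset.sum_nonneg fun _ _ => sq_nonneg _

lemma sq_apply_le_En (v : G →₀ ℝ) (h : G) : (v h) ^ 2 ≤ En v := by
  by_cases hh : h ∈ v.support
  · exact Finset.single_le_sum (f := fun g => (v g) ^ 2) (fun _ _ => sq_nonneg _) hh
  · rw [notMem_support_iff.1 hh]
    simpa using En_nonneg v

/-- the left Markov-type operator attached to `S` -/
def Top (S : Finset G) (v : G →₀ ℝ) : G →₀ ℝ :=
  ∑ x ∈ S, Finsupp.mapDomain (fun g => x * g) v

lemma Top_apply (S : Finset G) (v : G →₀ ℝ) (h : G) :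
    Top S v h = ∑ x ∈ S, v (x⁻¹ * h) := by
  rw [Top, Finsupp.finset_sum_apply]
  refine Finset.sum_congr rfl fun x _ => ?_
  have : h = x * (x⁻¹ * h) := by group
  rw [this, Finsupp.mapDomain_apply (mul_right_injective x)]
  group

lemma Top_support (S : Finset G) (v : G →₀ ℝ) : (Top S v).support ⊆ S * v.support := by
  refine Finset.Subset.trans Finsupp.support_finset_sum ?_
  intro h hh
  rw [Finset.mem_biUnion] at hh
  obtain ⟨x, hx, hh⟩ := hh
  have := Finsupp.mapDomain_support hh
  rw [Finset.mem_image] at this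
  obtain ⟨g, hg, rfl⟩ := this
  exact Finset.mul_mem_mul hx hg

section MI

variable (L : F2 →* G)

/-- the Cauchy–Schwarz weight -/
def psi (h x : G) : ℝ := if x ∈ F4 L then phi L (x⁻¹ * h) / phi L h else 1

lemma psi_pos (h x : G) : 0 < psi L h x := by
  rw [psi]
  split
  · exact div_pos (phi_pos L _) (phi_pos L _)
  · norm_num

lemma psi_row1 (hL : Function.Injective L) {S : Finset G} (hF : F4 L ⊆ S) (h : G) :
    ∑ x ∈ S, psi L h x ≤ (S.card : ℝ) - 4 + 2 * Real.sqrt 3 := by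
  have hcard : (F4 L).card = 4 := by
    rw [F4, Finset.card_image_of_injective _ hL]
    rfl
  rw [← Finset.sum_sdiff hF]
  have h1 : ∑ x ∈ S \ F4 L, psi L h x = (S.card : ℝ) - 4 := by
    rw [Finset.sum_congr rfl (fun x hx => ?_), Finset.sum_const, nsmul_eq_mul, mul_one,
      Finset.card_sdiff_of_subset hF, hcard]
    · have h4 : 4 ≤ S.card := hcard ▸ Finset.card_le_card hF
      push_cast [Nat.cast_sub h4]
      ring
    · rw [psi, if_neg (Finset.mem_sdiff.1 hx).2]
  have h2 : ∑ x ∈ F4 L, psi L h x ≤ 2 * Real.sqrt 3 := by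
    have : ∑ x ∈ F4 L, psi L h x = (∑ x ∈ F4 L, phi L (x⁻¹ * h)) / phi L h := by
      rw [Finset.sum_div]
      exact Finset.sum_congr rfl fun x hx => by rw [psi, if_pos hx]
    rw [this, div_le_iff₀ (phi_pos L h)]
    simpa [mul_comm] using rowBound_inv L hL h
  linarith

lemma psi_row2 (hL : Function.Injective L) {S : Finset G} (hF : F4 L ⊆ S) (g : G) :
    ∑ x ∈ S, (psi L (x * g) x)⁻¹ ≤ (S.card : ℝ) - 4 + 2 * Real.sqrt 3 := by
  have hcard : (F4 L).card = 4 := by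
    rw [F4, Finset.card_image_of_injective _ hL]
    rfl
  rw [← Finset.sum_sdiff hF]
  have h1 : ∑ x ∈ S \ F4 L, (psi L (x * g) x)⁻¹ = (S.card : ℝ) - 4 := by
    rw [Finset.sum_congr rfl (fun x hx => ?_), Finset.sum_const, nsmul_eq_mul, mul_one,
      Finset.card_sdiff_of_subset hF, hcard]
    · have h4 : 4 ≤ S.card := hcard ▸ Finset.card_le_card hF
      push_cast [Nat.cast_sub h4]
      ring
    · rw [psi, if_neg (Finset.mem_sdiff.1 hx).2, inv_one]
  have h2 : ∑ x ∈ F4 L, (psi L (x * g) x)⁻¹ ≤ 2 * Real.sqrt 3 := by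
    have he : ∀ x ∈ F4 L, (psi L (x * g) x)⁻¹ = phi L (x * g) / phi L g := by
      intro x hx
      rw [psi, if_pos hx, inv_mul_cancel_left, inv_div]
    rw [Finset.sum_congr rfl he, ← Finset.sum_div, div_le_iff₀ (phi_pos L g)]
    simpa [mul_comm] using rowBound L hL g
  linarith

/-- **Main inequality**: the energy contracts by `(|S| - 4 + 2√3)²` under one step. -/
lemma energy_step (hL : Function.Injective L) {S : Finset G} (hF : F4 L ⊆ S) (v : G →₀ ℝ) :
    En (Top S v) ≤ ((S.card : ℝ) - 4 + 2 * Real.sqrt 3) ^ 2 * En v := by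
  set c : ℝ := (S.card : ℝ) - 4 + 2 * Real.sqrt 3 with hc
  have hc0 : 0 ≤ c := by
    have h4 : 4 ≤ S.card := by
      have hcard : (F4 L).card = 4 := by
        rw [F4, Finset.card_image_of_injective _ hL]; rfl
      exact hcard ▸ Finset.card_le_card hF
    have : (4 : ℝ) ≤ (S.card : ℝ) := by exact_mod_cast h4
    nlinarith [sqrt3_pos]
  set A := v.support with hA
  set B := S * A with hB
  -- pointwise Cauchy-Schwarz
  have pointwise : ∀ h : G, (Top S v h) ^ 2 ≤
      c * ∑ x ∈ S, (v (x⁻¹ * h)) ^ 2 / psi L h x := by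
    intro h
    have hCS : (Top S v h) ^ 2 ≤
        (∑ x ∈ S, psi L h x) * ∑ x ∈ S, (v (x⁻¹ * h)) ^ 2 / psi L h x := by
      rw [Top_apply]
      have hdec : ∀ x, v (x⁻¹ * h) =
          Real.sqrt (psi L h x) * (v (x⁻¹ * h) / Real.sqrt (psi L h x)) := by
        intro x
        rw [mul_div_cancel₀]
        exact ne_of_gt (Real.sqrt_pos.2 (psi_pos L h x))
      calc (∑ x ∈ S, v (x⁻¹ * h)) ^ 2
          = (∑ x ∈ S, Real.sqrt (psi L h x) * (v (x⁻¹ * h) / Real.sqrt (psi L h x))) ^ 2 := by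
            rw [← Finset.sum_congr rfl fun x _ => (hdec x).symm]
        _ ≤ (∑ x ∈ S, Real.sqrt (psi L h x) ^ 2) *
            ∑ x ∈ S, (v (x⁻¹ * h) / Real.sqrt (psi L h x)) ^ 2 :=
            Finset.sum_mul_sq_le_sq_mul_sq S _ _
        _ = (∑ x ∈ S, psi L h x) * ∑ x ∈ S, (v (x⁻¹ * h)) ^ 2 / psi L h x := by
            congr 1
            · exact Finset.sum_congr rfl fun x _ =>
                Real.sq_sqrt (le_of_lt (psi_pos L h x))
            · refine Finset.sum_congr rfl fun x _ => ?_
              rw [div_pow, Real.sq_sqrt (le_of_lt (psi_pos L h x))]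
    refine hCS.trans ?_
    apply mul_le_mul_of_nonneg_right (psi_row1 L hL hF h)
    exact Finset.sum_nonneg fun x _ => div_nonneg (sq_nonneg _) (le_of_lt (psi_pos L h x))
  calc En (Top S v) = ∑ h ∈ B, (Top S v h) ^ 2 := En_eq_sum (Top_support S v)
    _ ≤ ∑ h ∈ B, c * ∑ x ∈ S, (v (x⁻¹ * h)) ^ 2 / psi L h x :=
        Finset.sum_le_sum fun h _ => pointwise h
    _ = c * ∑ x ∈ S, ∑ h ∈ B, (v (x⁻¹ * h)) ^ 2 / psi L h x := by
        rw [← Finset.mul_sum, Finset.sum_comm]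
    _ ≤ c * ∑ x ∈ S, ∑ g ∈ A, (v g) ^ 2 * (psi L (x * g) x)⁻¹ := by
        apply mul_le_mul_of_nonneg_left _ hc0
        refine Finset.sum_le_sum fun x hx => ?_
        have himg : ∑ h ∈ A.image (fun g => x * g), (v (x⁻¹ * h)) ^ 2 / psi L h x
            = ∑ g ∈ A, (v g) ^ 2 * (psi L (x * g) x)⁻¹ := by
          rw [Finset.sum_image (fun g _ g' _ hgg => mul_left_cancel hgg)]
          refine Finset.sum_congr rfl fun g _ => ?_
          rw [inv_mul_cancel_left, div_eq_mul_inv]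
        have hsub : A.image (fun g => x * g) ⊆ B := by
          intro h hh
          rw [Finset.mem_image] at hh
          obtain ⟨g, hg, rfl⟩ := hh
          exact Finset.mul_mem_mul hx hg
        have : ∑ h ∈ B, (v (x⁻¹ * h)) ^ 2 / psi L h x
            = ∑ h ∈ A.image (fun g => x * g), (v (x⁻¹ * h)) ^ 2 / psi L h x := by
          refine (Finset.sum_subset hsub ?_).symm
          intro h _ hh
          have hv : v (x⁻¹ * h) = 0 := by
            rw [← Finsupp.notMem_support_iff]
            intro hmem
            exact hh (Finset.mem_image.2 ⟨x⁻¹ * h, hmem, by group⟩)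
          rw [hv]
          norm_num
        rw [this, himg]
    _ = c * ∑ g ∈ A, (v g) ^ 2 * ∑ x ∈ S, (psi L (x * g) x)⁻¹ := by
        rw [Finset.sum_comm]
        congr 1
        exact Finset.sum_congr rfl fun g _ => (Finset.mul_sum _ _ _).symm
    _ ≤ c * ∑ g ∈ A, (v g) ^ 2 * c := by
        apply mul_le_mul_of_nonneg_left _ hc0
        exact Finset.sum_le_sum fun g _ =>
          mul_le_mul_of_nonneg_left (psi_row2 L hL hF g) (sq_nonneg _)
    _ = c ^ 2 * En v := by
        rw [← Finset.sum_mul, En]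
        ring

end MI
end SGPF


namespace SGPF
open FreeGroup Pointwise Finsupp

variable {G : Type*} [Group G]

/-- the walk vector: counts words with a given product -/
def walk (S : Finset G) (n : ℕ) : G →₀ ℝ :=
  ∑ w ∈ Fintype.piFinset (fun _ : Fin n => S), Finsupp.single (List.ofFn w).prod 1

lemma walk_zero (S : Finset G) : walk S 0 = Finsupp.single 1 1 := by
  rw [walk]
  have h1 : (Fintype.piFinset (fun _ : Fin 0 => S)) = Finset.univ := by
    ext w
    simp [Fintype.mem_piFinset]
  rw [h1, Finset.univ_unique, Finset.sum_singleton]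
  simp

lemma walk_succ (S : Finset G) (n : ℕ) : walk S (n + 1) = Top S (walk S n) := by
  rw [Top, walk]
  have expand : ∀ x : G, Finsupp.mapDomain (fun g => x * g) (walk S n)
      = ∑ w ∈ Fintype.piFinset (fun _ : Fin n => S),
          Finsupp.single (x * (List.ofFn w).prod) 1 := by
    intro x
    rw [walk]
    exact (map_sum (Finsupp.mapDomain.addMonoidHom (fun g => x * g)) _ _).trans
      (Finset.sum_congr rfl fun w _ => Finsupp.mapDomain_single)
  rw [Finset.sum_congr rfl fun x _ => expand x]
  -- now split the LHS sum via `Fin.cons`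
  rw [← Finset.sum_product']
  refine (Finset.sum_nbij' (fun w => (w 0, fun i => w i.succ)) (fun p => Fin.cons p.1 p.2)
    ?_ ?_ ?_ ?_ ?_)
  · intro w hw
    rw [Fintype.mem_piFinset] at hw
    exact Finset.mk_mem_product (hw 0) (Fintype.mem_piFinset.2 fun i => hw i.succ)
  · intro p hp
    rw [Finset.mem_product] at hp
    exact Fintype.mem_piFinset.2 fun i => i.cases hp.1 (Fintype.mem_piFinset.1 hp.2)
  · intro w _
    exact Fin.cons_self_tail w
  · intro p _
    simp [Fin.tail]
  · intro w _
    congr 1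
    rw [List.ofFn_succ]
    simp [List.prod_cons]

lemma walk_apply_one (S : Finset G) (n : ℕ) :
    walk S n 1 = ((wordsIn S (⊥ : Subgroup G) n).card : ℝ) := by
  rw [walk, Finsupp.finset_sum_apply]
  rw [Finset.sum_congr rfl fun w _ => Finsupp.single_apply]
  rw [Finset.sum_boole]
  rw [wordsIn]
  norm_num

lemma En_walk (L : F2 →* G) (hL : Function.Injective L) {S : Finset G} (hF : F4 L ⊆ S)
    (n : ℕ) : En (walk S n) ≤ (((S.card : ℝ) - 4 + 2 * Real.sqrt 3) ^ 2) ^ n := by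
  induction n with
  | zero =>
    rw [walk_zero, pow_zero, En]
    rw [Finsupp.support_single_ne_zero _ (by norm_num : (1:ℝ) ≠ 0)]
    simp
  | succ n ih =>
    rw [walk_succ]
    calc En (Top S (walk S n)) ≤ ((S.card : ℝ) - 4 + 2 * Real.sqrt 3) ^ 2 * En (walk S n) :=
          energy_step L hL hF _
      _ ≤ ((S.card : ℝ) - 4 + 2 * Real.sqrt 3) ^ 2
            * (((S.card : ℝ) - 4 + 2 * Real.sqrt 3) ^ 2) ^ n :=
          mul_le_mul_of_nonneg_left ih (sq_nonneg _)
      _ = (((S.card : ℝ) - 4 + 2 * Real.sqrt 3) ^ 2) ^ (n + 1) := by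
          rw [pow_succ]; ring

/-- The count of trivial words of length `n` is at most `(|S| - 4 + 2√3)^n`. -/
lemma card_wordsIn_le (L : F2 →* G) (hL : Function.Injective L) {S : Finset G} (hF : F4 L ⊆ S)
    (n : ℕ) : ((wordsIn S (⊥ : Subgroup G) n).card : ℝ)
      ≤ ((S.card : ℝ) - 4 + 2 * Real.sqrt 3) ^ n := by
  set c : ℝ := (S.card : ℝ) - 4 + 2 * Real.sqrt 3 with hc
  have hc0 : 0 ≤ c := by
    have hcard : (F4 L).card = 4 := by
      rw [F4, Finset.card_image_of_injective _ hL]; rfl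
    have h4 : 4 ≤ S.card := hcard ▸ Finset.card_le_card hF
    have : (4 : ℝ) ≤ (S.card : ℝ) := by exact_mod_cast h4
    nlinarith [sqrt3_pos]
  have hsq : ((wordsIn S (⊥ : Subgroup G) n).card : ℝ) ^ 2 ≤ (c ^ n) ^ 2 := by
    rw [← walk_apply_one]
    calc (walk S n 1) ^ 2 ≤ En (walk S n) := sq_apply_le_En _ _
      _ ≤ (c ^ 2) ^ n := En_walk L hL hF n
      _ = (c ^ n) ^ 2 := by rw [← pow_mul, ← pow_mul, Nat.mul_comm]
  calc ((wordsIn S (⊥ : Subgroup G) n).card : ℝ)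
      = Real.sqrt (((wordsIn S (⊥ : Subgroup G) n).card : ℝ) ^ 2) :=
        (Real.sqrt_sq (Nat.cast_nonneg _)).symm
    _ ≤ Real.sqrt ((c ^ n) ^ 2) := Real.sqrt_le_sqrt hsq
    _ = c ^ n := Real.sqrt_sq (pow_nonneg hc0 n)

lemma mem_F4 (L : F2 →* G) {x : G} :
    x ∈ F4 L ↔ ∃ y ∈ Y4, L y = x := by
  rw [F4]
  exact Finset.mem_image

end SGPF

namespace SGPF

lemma stdGens_inv_mem {d : ℕ} {x : FreeGroup (Fin d)} (hx : x ∈ stdGens d) :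
    x⁻¹ ∈ stdGens d := by
  simp only [stdGens, Finset.mem_union, Finset.mem_image, Finset.mem_univ, true_and] at hx ⊢
  rcases hx with ⟨i, rfl⟩ | ⟨i, rfl⟩
  · exact Or.inr ⟨i, rfl⟩
  · exact Or.inl ⟨i, by simp⟩

lemma stdGens_pow_inv_mem {d k : ℕ} {x : FreeGroup (Fin d)} (hx : x ∈ stdGens d ^ k) :
    x⁻¹ ∈ stdGens d ^ k := by
  have hsym : (stdGens d)⁻¹ = stdGens d := by
    ext y
    rw [Finset.mem_inv']
    constructor
    · intro h
      simpa using stdGens_inv_mem h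
    · exact stdGens_inv_mem
  have : (stdGens d ^ k)⁻¹ = stdGens d ^ k := by
    rw [← inv_pow, hsym]
  rw [← this, Finset.mem_inv', inv_inv]
  exact hx

lemma stdGens_card_le (d : ℕ) : (stdGens d).card ≤ 2 * d := by
  refine (Finset.card_union_le _ _).trans ?_
  have h1 := Finset.card_image_le (s := (Finset.univ : Finset (Fin d)))
    (f := fun i => FreeGroup.of i)
  have h2 := Finset.card_image_le (s := (Finset.univ : Finset (Fin d)))
    (f := fun i => (FreeGroup.of i)⁻¹)
  simp only [Finset.card_univ, Fintype.card_fin] at h1 h2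
  omega

end SGPF


namespace SGPF

/-- Main analytic bound: if `S` contains the four free letters `F4 L`, then the
limsup defining the spectral radius is at most `1 - (4 - 2√3)/M` for any `M ≥ |S|`. -/
lemma specRad_le {G : Type*} [Group G] (L : F2 →* G) (hL : Function.Injective ⇑L)
    {S : Finset G} (hF : F4 L ⊆ S) {M : ℝ} (hSM : ((S.card : ℝ)) ≤ M) :
    specRad S (⊥ : Subgroup G) ≤ 1 - (4 - 2 * Real.sqrt 3) / M := by
  have hs3 : Real.sqrt 3 ^ 2 = 3 := Real.sq_sqrt (by norm_num)
  have hs3pos : (0:ℝ) < Real.sqrt 3 := SGPF.sqrt3_pos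
  have hgap : (0:ℝ) < 4 - 2 * Real.sqrt 3 := by nlinarith
  have hcardF4 : (SGPF.F4 L).card = 4 := by
    rw [SGPF.F4, Finset.card_image_of_injective _ hL]; rfl
  have h4S : 4 ≤ S.card := hcardF4 ▸ Finset.card_le_card hF
  have h4SR : (4:ℝ) ≤ (S.card : ℝ) := by exact_mod_cast h4S
  have hSpos : (0:ℝ) < (S.card : ℝ) := by linarith
  have hMpos : (0:ℝ) < M := lt_of_lt_of_le hSpos hSM
  have hSne : S.Nonempty := Finset.card_pos.1 (by omega)
  rw [specRad, if_pos hSne]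
  set c : ℝ := (S.card : ℝ) - 4 + 2 * Real.sqrt 3 with hc
  have hc0 : 0 ≤ c := by nlinarith
  set γ : ℝ := c / (S.card : ℝ) with hγ
  have hγ0 : 0 ≤ γ := div_nonneg hc0 (le_of_lt hSpos)
  have hγβ : γ ≤ 1 - (4 - 2 * Real.sqrt 3) / M := by
    have hrepr : γ = 1 - (4 - 2 * Real.sqrt 3) / (S.card : ℝ) := by
      rw [hγ, hc]
      field_simp
      ring
    have hmono : (4 - 2 * Real.sqrt 3) / M ≤ (4 - 2 * Real.sqrt 3) / (S.card : ℝ) := by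
      gcongr
    linarith
  refine Filter.limsup_le_of_le
    (Filter.isCoboundedUnder_le_of_le Filter.atTop (fun n =>
      Real.rpow_nonneg (div_nonneg (Nat.cast_nonneg _) (by positivity)) _)) ?_
  filter_upwards [Filter.eventually_ge_atTop 1] with n hn
  have hu : ((wordsIn S (⊥ : Subgroup G) (2 * n)).card : ℝ) ≤ c ^ (2 * n) :=
    SGPF.card_wordsIn_le L hL hF (2 * n)
  have hbase : ((wordsIn S (⊥ : Subgroup G) (2 * n)).card : ℝ) / (S.card : ℝ) ^ (2 * n)
      ≤ γ ^ (2 * n) := by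
    rw [hγ, div_pow]
    gcongr
  have hbase0 : 0 ≤ ((wordsIn S (⊥ : Subgroup G) (2 * n)).card : ℝ) / (S.card : ℝ) ^ (2 * n) :=
    div_nonneg (Nat.cast_nonneg _) (by positivity)
  have hexp0 : 0 ≤ (1:ℝ) / (2 * (n:ℝ)) := by positivity
  calc (((wordsIn S (⊥ : Subgroup G) (2 * n)).card : ℝ) / (S.card : ℝ) ^ (2 * n))
        ^ ((1:ℝ) / (2 * (n:ℝ)))
      ≤ (γ ^ (2 * n)) ^ ((1:ℝ) / (2 * (n:ℝ))) := Real.rpow_le_rpow hbase0 hbase hexp0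
    _ = γ := by
        have hn1 : (1:ℝ) ≤ (n:ℝ) := by exact_mod_cast hn
        rw [← Real.rpow_natCast γ (2 * n), ← Real.rpow_mul hγ0]
        rw [show ((2 * n : ℕ) : ℝ) * ((1:ℝ) / (2 * (n:ℝ))) = 1 by
          push_cast
          field_simp]
        exact Real.rpow_one γ
    _ ≤ 1 - (4 - 2 * Real.sqrt 3) / M := hγβ

end SGPF


/-- **Lemma.** For every `d ≥ 2` and `k ≥ 1` there is `β = β(k,d) < 1` such that: for any
subgroup `H` of the free group `F_d`, if `H ∩ S^k` contains two elements `a, b` generating a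
free subgroup of rank `2`, then `ρ(⟨H ∩ S^k⟩, H ∩ S^k) ≤ β`. -/
theorem spectral_gap_of_free_pair (d k : ℕ) (hd : 2 ≤ d) (hk : 1 ≤ k) :
    ∃ β : ℝ, β < 1 ∧
      ∀ (H : Subgroup (FreeGroup (Fin d))) (a b : FreeGroup (Fin d)),
        a ∈ H → a ∈ stdGens d ^ k → b ∈ H → b ∈ stdGens d ^ k →
        Function.Injective ⇑(FreeGroup.lift (![a, b] : Fin 2 → FreeGroup (Fin d))) →
        specRad ((stdGens d ^ k).filter fun x => x ∈ H) ⊥ ≤ β := by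

  have hs3 : Real.sqrt 3 ^ 2 = 3 := Real.sq_sqrt (by norm_num)
  have hs3pos : (0:ℝ) < Real.sqrt 3 := SGPF.sqrt3_pos
  have hgap : (0:ℝ) < 4 - 2 * Real.sqrt 3 := by nlinarith
  have hMpos : (0:ℝ) < (2 * (d:ℝ)) ^ k := by
    have : (0:ℝ) < (d:ℝ) := by exact_mod_cast lt_of_lt_of_le (by norm_num) hd
    positivity
  refine ⟨1 - (4 - 2 * Real.sqrt 3) / (2 * (d:ℝ)) ^ k, ?_, ?_⟩
  · have : 0 < (4 - 2 * Real.sqrt 3) / (2 * (d:ℝ)) ^ k := div_pos hgap hMpos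
    linarith
  intro H a b ha hak hb hbk hinj
  have hLa : (FreeGroup.lift (![a, b] : Fin 2 → FreeGroup (Fin d))) (FreeGroup.of 0) = a := by
    rw [FreeGroup.lift_apply_of]; rfl
  have hLb : (FreeGroup.lift (![a, b] : Fin 2 → FreeGroup (Fin d))) (FreeGroup.of 1) = b := by
    rw [FreeGroup.lift_apply_of]; rfl
  have hF : SGPF.F4 (FreeGroup.lift (![a, b] : Fin 2 → FreeGroup (Fin d)))
      ⊆ (stdGens d ^ k).filter fun x => x ∈ H := by
    intro x hx
    obtain ⟨y, hy, rfl⟩ := (SGPF.mem_F4 _).1 hx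
    simp only [SGPF.Y4, Finset.mem_insert, Finset.mem_singleton] at hy
    rcases hy with rfl | rfl | rfl | rfl
    · rw [hLa]; exact Finset.mem_filter.2 ⟨hak, ha⟩
    · rw [MonoidHom.map_inv, hLa]
      exact Finset.mem_filter.2 ⟨SGPF.stdGens_pow_inv_mem hak, inv_mem ha⟩
    · rw [hLb]; exact Finset.mem_filter.2 ⟨hbk, hb⟩
    · rw [MonoidHom.map_inv, hLb]
      exact Finset.mem_filter.2 ⟨SGPF.stdGens_pow_inv_mem hbk, inv_mem hb⟩
  have hSM : ((((stdGens d ^ k).filter fun x => x ∈ H).card : ℝ)) ≤ (2 * (d:ℝ)) ^ k := by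
    have h1 : ((stdGens d ^ k).filter fun x => x ∈ H).card ≤ (stdGens d ^ k).card :=
      Finset.card_le_card (Finset.filter_subset _ _)
    have h2 : (stdGens d ^ k).card ≤ (stdGens d).card ^ k := Finset.card_pow_le
    have h3 : (stdGens d).card ^ k ≤ (2 * d) ^ k :=
      Nat.pow_le_pow_left (SGPF.stdGens_card_le d) k
    have h4 : ((stdGens d ^ k).filter fun x => x ∈ H).card ≤ (2 * d) ^ k :=
      le_trans h1 (le_trans h2 h3)
    calc ((((stdGens d ^ k).filter fun x => x ∈ H).card : ℝ)) ≤ (((2 * d) ^ k : ℕ) : ℝ) := by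
          exact_mod_cast h4
      _ = (2 * (d:ℝ)) ^ k := by push_cast; ring
  exact SGPF.specRad_le _ hinj hF hSM

end
end
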